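/- arXiv:2305.09971 — 6 statements merged into one kernel-verified Lean document; each statement's English description precedes it below -/
import Mathlib

section
/- Let G be a connected simple graph on n vertices and let G' be the graph obtained from G by adding one new vertex adjacent to every vertex of G. Then L(G') = \sum_{k=0}^{n} (n-k)! \cdot L_k(G), where L_0(G) = 1. -/
/-!
Split a labeling of the cone at the position `k` of the apex. Before the apex the labeling
never uses an apex edge, so its first `k` vertices form a labeling of `G` disrupted after the
`k`-th vertex. Every vertex after the apex is adjacent to it, so the remaining `n - k`
vertices of `G` may follow in any of the `(n - k)!` orders.
-/

open Finset

/-- A sequence of `k` distinct vertices of `G` such that every vertex other than the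
first is adjacent to some earlier vertex (a random walk labeling disrupted after the
`k`-th vertex). -/
def IsRWLPrefix {V : Type*} (G : SimpleGraph V) {k : ℕ} (v : Fin k → V) : Prop :=
  Function.Injective v ∧ ∀ i : Fin k, i.val ≠ 0 → ∃ j : Fin k, j < i ∧ G.Adj (v j) (v i)

/-- `L_k(G)`: the number of random walk labelings of `G` disrupted after the `k`-th
vertex.  For `k = 0` this equals `1` (the empty sequence). -/
noncomputable def rwlPrefixCount {V : Type*} (G : SimpleGraph V) (k : ℕ) : ℕ :=
  Nat.card {v : Fin k → V // IsRWLPrefix G v}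

/-- `L(G)`: the number of random walk labelings of `G`, i.e. orderings of all the
vertices of `G` in which every vertex other than the first is adjacent to some
earlier vertex. -/
noncomputable def rwlCount {V : Type*} (G : SimpleGraph V) [Fintype V] : ℕ :=
  rwlPrefixCount G (Fintype.card V)

/-- The cone over `G`: a new vertex (`none`) joined to every vertex of `G`. -/
def SimpleGraph.cone {V : Type*} (G : SimpleGraph V) : SimpleGraph (Option V) :=
  SimpleGraph.fromRel (fun a b =>
    match a, b with
    | none, some _ => True
    | some x, some y => G.Adj x y
    | _, _ => False)

open Function

namespace SimpleGraph
variable {V : Type*} (G : SimpleGraph V)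

@[simp]
lemma cone_adj_none_some (x : V) : G.cone.Adj none (some x) :=
  (fromRel_adj _ _ _).2 ⟨by simp, Or.inl trivial⟩

@[simp]
lemma cone_adj_some_none (x : V) : G.cone.Adj (some x) none :=
  (G.cone_adj_none_some x).symm

@[simp]
lemma cone_adj_some_some {x y : V} : G.cone.Adj (some x) (some y) ↔ G.Adj x y := by
  rw [cone, fromRel_adj]
  exact ⟨fun ⟨_, h⟩ => h.elim id fun h => h.symm, fun h => ⟨by simpa using h.ne, Or.inl h⟩⟩

def coneEmbedding : G ↪g G.cone :=
  ⟨Embedding.some, G.cone_adj_some_some⟩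

end SimpleGraph

section
variable {V W : Type*} {G : SimpleGraph V} {H : SimpleGraph W}

lemma SimpleGraph.Embedding.isRWLPrefix_comp_iff (f : G ↪g H) {k : ℕ} {v : Fin k → V} :
    IsRWLPrefix H (f ∘ v) ↔ IsRWLPrefix G v := by
  simp [IsRWLPrefix, f.injective.of_comp_iff]

lemma isRWLPrefix_comp_cast {k m : ℕ} (h : m = k) {v : Fin k → V} :
    IsRWLPrefix G (v ∘ Fin.cast h) ↔ IsRWLPrefix G v := by
  subst h; rfl

lemma IsRWLPrefix.of_append {k m : ℕ} {u : Fin k → V} {w : Fin m → V}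
    (h : IsRWLPrefix G (Fin.append u w)) : IsRWLPrefix G u := by
  refine ⟨(Fin.append_injective_iff.1 h.1).1, fun i hi => ?_⟩
  obtain ⟨j, hji, hadj⟩ := h.2 (Fin.castAdd m i) hi
  obtain ⟨j, rfl⟩ : ∃ j' : Fin k, Fin.castAdd m j' = j :=
    ⟨⟨j, (Fin.lt_def.1 hji).trans i.isLt⟩, rfl⟩
  exact ⟨j, Fin.lt_def.2 (Fin.lt_def.1 hji), by simpa using hadj⟩

end

section
variable {V : Type*} {k m : ℕ}

def coneSeq (p : Fin k → V) (q : Fin m → V) : Fin (k + (m + 1)) → Option V :=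
  Fin.append (some ∘ p) (Fin.cons none (some ∘ q))

@[simp]
lemma coneSeq_castAdd (p : Fin k → V) (q : Fin m → V) (i : Fin k) :
    coneSeq p q (Fin.castAdd (m + 1) i) = some (p i) := by
  simp [coneSeq]

@[simp]
lemma coneSeq_natAdd_zero (p : Fin k → V) (q : Fin m → V) :
    coneSeq p q (Fin.natAdd k 0) = none := by
  simp [coneSeq]

@[simp]
lemma coneSeq_natAdd_succ (p : Fin k → V) (q : Fin m → V) (i : Fin m) :
    coneSeq p q (Fin.natAdd k i.succ) = some (q i) := by
  simp [coneSeq]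

lemma coneSeq_injective_iff {p : Fin k → V} {q : Fin m → V} :
    Injective (coneSeq p q) ↔ Injective p ∧ Injective q ∧ ∀ i j, p i ≠ q j := by
  simp [coneSeq, Fin.append_injective_iff, Fin.cons_injective_iff, Fin.forall_fin_succ,
    Option.some_injective _ |>.of_comp_iff]

lemma coneSeq_inj {p p' : Fin k → V} {q q' : Fin m → V} :
    coneSeq p q = coneSeq p' q' ↔ p = p' ∧ q = q' := by
  refine ⟨fun h => ⟨funext fun i => ?_, funext fun i => ?_⟩, fun ⟨rfl, rfl⟩ => rfl⟩
  · simpa using congrFun h (Fin.castAdd _ i)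
  · simpa using congrFun h (Fin.natAdd k i.succ)

lemma coneSeq_eq_none_iff {p : Fin k → V} {q : Fin m → V} {i : Fin (k + (m + 1))} :
    coneSeq p q i = none ↔ i = Fin.natAdd k 0 := by
  refine ⟨fun h => ?_, fun h => h ▸ coneSeq_natAdd_zero p q⟩
  induction i using Fin.addCases with
  | left i => simp at h
  | right i => cases i using Fin.cases with
    | zero => rfl
    | succ i => simp at h

lemma exists_coneSeq_eq {w : Fin (k + (m + 1)) → Option V} (hw : Injective w)
    (hnone : w (Fin.natAdd k 0) = none) : ∃ p q, w = coneSeq p q := by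
  have hsome : ∀ i, i ≠ Fin.natAdd k 0 → (w i).isSome := fun i hi =>
    Option.isSome_iff_ne_none.2 fun h => hi (hw (h.trans hnone.symm))
  refine ⟨fun i => (w (Fin.castAdd _ i)).get (hsome _ ?_),
    fun i => (w (Fin.natAdd k i.succ)).get (hsome _ ?_), ?_⟩
  · exact Fin.ne_of_lt (Fin.lt_def.2 (by simp))
  · simp [Fin.ext_iff]
  funext i
  induction i using Fin.addCases with
  | left i => simp
  | right i => cases i using Fin.cases with
    | zero => simp [hnone]
    | succ i => simp

lemma isRWLPrefix_cone_coneSeq_iff {G : SimpleGraph V} {p : Fin k → V} {q : Fin m → V} :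
    IsRWLPrefix G.cone (coneSeq p q) ↔ IsRWLPrefix G p ∧ Injective q ∧ ∀ i j, p i ≠ q j := by
  refine ⟨fun h => ⟨?_, (coneSeq_injective_iff.1 h.1).2⟩, fun ⟨hp, hq, hpq⟩ => ?_⟩
  · exact G.coneEmbedding.isRWLPrefix_comp_iff.1 h.of_append
  refine ⟨coneSeq_injective_iff.2 ⟨hp.1, hq, hpq⟩, fun i hi => ?_⟩
  induction i using Fin.addCases with
  | left i =>
    obtain ⟨j, hji, hadj⟩ := hp.2 i hi
    exact ⟨Fin.castAdd _ j, Fin.lt_def.2 (Fin.lt_def.1 hji), by simpa using hadj⟩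
  | right i => cases i using Fin.cases with
    | zero =>
      have hk : 0 < k := by simpa using Nat.pos_of_ne_zero hi
      exact ⟨Fin.castAdd _ ⟨0, hk⟩, Fin.lt_def.2 (by simpa using hk), by
        rw [coneSeq_castAdd, coneSeq_natAdd_zero]; exact G.cone_adj_some_none _⟩
    | succ i => exact ⟨Fin.natAdd k 0, Fin.lt_def.2 (by simp), by simp⟩

end

lemma card_injective_avoiding_range {V : Type*} [Fintype V] {k m : ℕ} {p : Fin k → V}
    (hp : Injective p) :
    Nat.card {q : Fin m → V // Injective q ∧ ∀ i j, p i ≠ q j} =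
      (Fintype.card V - k).descFactorial m := by
  classical
  let e : {q : Fin m → V // Injective q ∧ ∀ i j, p i ≠ q j} ≃ (Fin m ↪ {x // x ∉ Set.range p}) :=
    { toFun q := ⟨fun i => ⟨q.1 i, fun ⟨j, hj⟩ => q.2.2 j i hj⟩,
        fun _ _ h => q.2.1 (congrArg Subtype.val h)⟩
      invFun f := ⟨fun i => f i, fun _ _ h => f.injective (Subtype.ext h),
        fun i j h => (f j).2 ⟨i, h⟩⟩
      left_inv _ := rfl
      right_inv _ := rfl }
  rw [Nat.card_congr e, Nat.card_eq_fintype_card, Fintype.card_embedding_eq, Fintype.card_fin,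
    Fintype.card_subtype_compl, ← Nat.card_eq_fintype_card (α := Set.range p),
    Nat.card_range_of_injective hp, Nat.card_fin]

section
variable {V : Type*} (G : SimpleGraph V) (n : ℕ)

/-- A cone labeling of length `n + 1` with the apex at position `k`: the labels `p` before the
apex and `q` after it. -/
abbrev ConeSplit : Type _ :=
  Σ k : Fin (n + 1), Σ p : {p : Fin k → V // IsRWLPrefix G p},
    {q : Fin (n - k) → V // Injective q ∧ ∀ i j, p.1 i ≠ q j}

def coneSplitLabeling : ConeSplit G n → {v : Fin (n + 1) → Option V // IsRWLPrefix G.cone v}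
  | ⟨k, p, q⟩ => ⟨coneSeq p.1 q.1 ∘ Fin.cast (by omega),
      (isRWLPrefix_comp_cast _).2 (isRWLPrefix_cone_coneSeq_iff.2 ⟨p.2, q.2⟩)⟩

lemma coneSplitLabeling_injective : Injective (coneSplitLabeling G n) := by
  rintro ⟨k, ⟨p, hp⟩, ⟨q, hq⟩⟩ ⟨k', ⟨p', hp'⟩, ⟨q', hq'⟩⟩ h
  have hfun : coneSeq p q ∘ Fin.cast _ = coneSeq p' q' ∘ Fin.cast _ := congrArg Subtype.val h
  obtain rfl : k = k' := by
    have hk := congrFun hfun k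
    simp only [comp_apply] at hk
    rw [coneSeq_eq_none_iff.2 (Fin.ext (by simp)), eq_comm, coneSeq_eq_none_iff] at hk
    exact Fin.ext (by simpa using congrArg Fin.val hk)
  obtain ⟨rfl, rfl⟩ : p = p' ∧ q = q' := coneSeq_inj.1 <| funext fun i => by
    have := congrFun hfun (Fin.cast (by omega) i)
    simpa only [comp_apply, Fin.cast_cast, Fin.cast_eq_self] using this
  rfl

lemma coneSplitLabeling_surjective [Fintype V] :
    Surjective (coneSplitLabeling G (Fintype.card V)) := by
  rintro ⟨v, hv⟩
  have hbij : Bijective v :=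
    (Fintype.bijective_iff_injective_and_card v).2 ⟨hv.1, by simp⟩
  obtain ⟨a, ha⟩ := hbij.2 none
  have hlen : a + (Fintype.card V - a + 1) = Fintype.card V + 1 := by omega
  obtain ⟨p, q, hpq⟩ := exists_coneSeq_eq (hv.1.comp (Fin.cast_injective hlen))
    ((congrArg v (Fin.ext (by simp))).trans ha)
  have hv' : IsRWLPrefix G.cone (coneSeq p q) := hpq ▸ (isRWLPrefix_comp_cast hlen).2 hv
  obtain ⟨hp, hq⟩ := isRWLPrefix_cone_coneSeq_iff.1 hv'
  refine ⟨⟨a, ⟨p, hp⟩, ⟨q, hq⟩⟩, Subtype.ext <| funext fun i => ?_⟩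
  simp [coneSplitLabeling, ← hpq]

end

theorem rwlCount_cone_general {V : Type*} [Fintype V] (G : SimpleGraph V) :
    rwlCount G.cone =
      ∑ k ∈ Finset.range (Fintype.card V + 1),
        (Fintype.card V - k).factorial * rwlPrefixCount G k := by
  classical
  have hsplit := Nat.card_eq_of_bijective _
    ⟨coneSplitLabeling_injective G _, coneSplitLabeling_surjective G⟩
  rw [rwlCount, rwlPrefixCount, Fintype.card_option, ← hsplit, Nat.card_sigma,
    ← Fin.sum_univ_eq_sum_range]
  refine Finset.sum_congr rfl fun k _ => ?_
  rw [Nat.card_sigma, Finset.sum_congr rfl fun p _ => card_injective_avoiding_range p.2.1, Finset.sum_const,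
    Finset.card_univ, smul_eq_mul, Nat.descFactorial_self, rwlPrefixCount,
    Nat.card_eq_fintype_card, mul_comm]

theorem rwlCount_cone {V : Type*} [Fintype V] (G : SimpleGraph V)
    (hG : G.Connected) :
    rwlCount G.cone =
      ∑ k ∈ Finset.range (Fintype.card V + 1),
        (Fintype.card V - k).factorial * rwlPrefixCount G k :=
  rwlCount_cone_general G
end

section
/- For n ≥ 3 and 1 ≤ k ≤ n-1, the number of disrupted random walk labelings of the cycle graph C_n satisfies L_k(C_n) = n·2^{k-1}, and L_n(C_n) = L(C_n) = n·2^{n-2}. -/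
open Finset

/-! The vertices listed by a disrupted random walk labeling of `C_n` always form an arc
`a, a + 1, …, a + k - 1`, so the next vertex must be `a - 1` or `a + k`. These two are distinct
while `k ≤ n - 2` and coincide when `k = n - 1`. Hence `L_1 = n`, `L_{k+1} = 2 L_k` for
`1 ≤ k ≤ n - 2`, and `L_n = L_{n-1}`. -/

section General

variable {V : Type*} (G : SimpleGraph V)

def outerBoundary (S : Set V) : Set V := {x | x ∉ S ∧ ∃ y ∈ S, G.Adj y x}

theorem isRWLPrefix_snoc_iff {k : ℕ} (w : Fin (k + 1) → V) (x : V) :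
    IsRWLPrefix G (Fin.snoc w x : Fin (k + 2) → V) ↔
      IsRWLPrefix G w ∧ x ∈ outerBoundary G (Set.range w) := by
  simp [IsRWLPrefix, outerBoundary, Fin.snoc_injective_iff, Fin.forall_fin_succ' (n := k + 1),
    Fin.exists_fin_succ' (n := k + 1), not_lt_of_gt (Fin.castSucc_lt_last _)]
  tauto

theorem rwlPrefixCount_one : rwlPrefixCount G 1 = Nat.card V := by
  have hall (v : Fin 1 → V) : IsRWLPrefix G v :=
    ⟨Function.injective_of_subsingleton v, fun i hi => absurd (Fin.val_eq_zero i) hi⟩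
  rw [rwlPrefixCount, Nat.card_congr ((Equiv.subtypeUnivEquiv hall).trans (Equiv.funUnique _ _))]

def snocPrefixEquiv (k : ℕ) :
    {v : Fin (k + 2) → V // IsRWLPrefix G v} ≃
      Σ w : {w : Fin (k + 1) → V // IsRWLPrefix G w}, outerBoundary G (Set.range w.1) where
  toFun v :=
    have h := (isRWLPrefix_snoc_iff G _ _).1 (by rw [Fin.snoc_init_self]; exact v.2)
    ⟨⟨Fin.init v.1, h.1⟩, ⟨v.1 (Fin.last _), h.2⟩⟩
  invFun p := ⟨Fin.snoc p.1.1 p.2.1, (isRWLPrefix_snoc_iff G _ _).2 ⟨p.1.2, p.2.2⟩⟩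
  left_inv v := Subtype.ext (Fin.snoc_init_self v.1)
  right_inv p :=
    Sigma.subtype_ext (Subtype.ext (Fin.init_snoc (α := fun _ => V) _ _))
      (Fin.snoc_last (α := fun _ => V) _ _)

theorem rwlPrefixCount_succ_succ [Finite V] {k c : ℕ}
    (h : ∀ w : Fin (k + 1) → V, IsRWLPrefix G w →
      Nat.card (outerBoundary G (Set.range w)) = c) :
    rwlPrefixCount G (k + 2) = c * rwlPrefixCount G (k + 1) := by
  have := Fintype.ofFinite {w : Fin (k + 1) → V // IsRWLPrefix G w}
  rw [rwlPrefixCount, Nat.card_congr (snocPrefixEquiv G k), Nat.card_sigma,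
    Finset.sum_congr rfl fun w _ => h w.1 w.2, Finset.sum_const, Finset.card_univ, smul_eq_mul,
    mul_comm, rwlPrefixCount, Nat.card_eq_fintype_card]

end General

section Cycle

open SimpleGraph Fin.CommRing

variable {n : ℕ}

def cycleArc (a : Fin (n + 2)) (k : ℕ) : Set (Fin (n + 2)) := {x | ∃ i < k, x = a + i}

theorem cycleArc_succ (a : Fin (n + 2)) (k : ℕ) :
    cycleArc a (k + 1) = insert (a + k) (cycleArc a k) := by
  ext x
  simp only [cycleArc, Set.mem_insert_iff, Set.mem_ofPred_eq, Nat.lt_succ_iff_lt_or_eq]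
  grind

theorem cycleArc_sub_one_succ (a : Fin (n + 2)) (k : ℕ) :
    cycleArc (a - 1) (k + 1) = insert (a - 1) (cycleArc a k) := by
  ext x
  simp only [cycleArc, Set.mem_insert_iff, Set.mem_ofPred_eq]
  constructor
  · rintro ⟨_ | i, hi, rfl⟩
    · simp
    · exact Or.inr ⟨i, by omega, by push_cast; ring⟩
  · rintro (rfl | ⟨i, hi, rfl⟩)
    · exact ⟨0, by omega, by simp⟩
    · exact ⟨i + 1, by omega, by push_cast; ring⟩

theorem natCast_inj_of_lt {m i j : ℕ} [NeZero m] (hi : i < m) (hj : j < m)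
    (h : (i : Fin m) = j) : i = j := by
  simpa [Fin.ext_iff, Nat.mod_eq_of_lt hi, Nat.mod_eq_of_lt hj] using h

theorem outerBoundary_cycleArc (a : Fin (n + 2)) {k : ℕ} (hk0 : 0 < k) (hkn : k < n + 2) :
    outerBoundary (cycleGraph (n + 2)) (cycleArc a k) = {a + k, a - 1} := by
  ext x
  simp only [outerBoundary, cycleArc, cycleGraph_adj, Set.mem_insert_iff, Set.mem_singleton_iff,
    Set.mem_ofPred_eq]
  constructor
  · rintro ⟨hx, _, ⟨i, hi, rfl⟩, hadj | hadj⟩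
    · rcases i with _ | j
      · right
        push_cast at hadj
        linear_combination -hadj
      · refine absurd ⟨j, by omega, ?_⟩ hx
        push_cast at hadj
        linear_combination -hadj
    · have hx' : x = a + (i + 1 : ℕ) := by push_cast; linear_combination hadj
      obtain hik | hik := (Nat.succ_le_of_lt hi).eq_or_lt
      · left
        rwa [← hik]
      · exact absurd ⟨i + 1, hik, hx'⟩ hx
  · rintro (rfl | rfl)
    · refine ⟨fun ⟨i, hi, h⟩ => ?_, a + (k - 1 : ℕ), ⟨k - 1, by omega, rfl⟩,
        Or.inr ?_⟩
      · have := natCast_inj_of_lt hkn (by omega) (add_left_cancel h)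
        omega
      · rw [Nat.cast_sub (by omega)]; ring
    · refine ⟨fun ⟨i, hi, h⟩ => ?_, a, ⟨0, hk0, by simp⟩, Or.inl (by ring)⟩
      have : ((i + 1 : ℕ) : Fin (n + 2)) = 0 := by push_cast; linear_combination -h
      rw [Fin.natCast_eq_zero] at this
      have := Nat.le_of_dvd (by omega) this
      omega

theorem exists_range_eq_cycleArc {k : ℕ} (hk : k < n + 2) (w : Fin (k + 1) → Fin (n + 2))
    (hw : IsRWLPrefix (cycleGraph (n + 2)) w) : ∃ a, Set.range w = cycleArc a (k + 1) := by
  induction k with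
  | zero => exact ⟨w 0, by ext x; simp [cycleArc, Set.range_unique]⟩
  | succ k ih =>
    obtain ⟨w, x, rfl⟩ : ∃ w' x, w = Fin.snoc w' x :=
      ⟨Fin.init w, w (Fin.last _), (Fin.snoc_init_self w).symm⟩
    obtain ⟨hw, hx⟩ := (isRWLPrefix_snoc_iff _ w x).1 hw
    obtain ⟨a, ha⟩ := ih (by omega) w hw
    rw [ha, outerBoundary_cycleArc a k.succ_pos (by omega)] at hx
    rw [Fin.range_snoc, ha]
    rcases hx with rfl | rfl
    · exact ⟨a, (cycleArc_succ a (k + 1)).symm⟩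
    · exact ⟨a - 1, (cycleArc_sub_one_succ a (k + 1)).symm⟩

theorem natCard_outerBoundary_range {k : ℕ} (hk : k + 1 < n + 2) (w : Fin (k + 1) → Fin (n + 2))
    (hw : IsRWLPrefix (cycleGraph (n + 2)) w) :
    Nat.card (outerBoundary (cycleGraph (n + 2)) (Set.range w)) =
      if k + 2 = n + 2 then 1 else 2 := by
  obtain ⟨a, ha⟩ := exists_range_eq_cycleArc (by omega) w hw
  rw [ha, outerBoundary_cycleArc a k.succ_pos hk, Nat.card_coe_set_eq]
  have hcoll : a + (k + 1 : ℕ) = a - 1 ↔ k + 2 = n + 2 := by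
    have hsum : a + (k + 1 : ℕ) = a - 1 ↔ ((k + 2 : ℕ) : Fin (n + 2)) = 0 := by
      push_cast
      constructor <;> intro h <;> linear_combination h
    rw [hsum, Fin.natCast_eq_zero]
    exact ⟨fun h => by have := Nat.le_of_dvd (by omega) h; omega, fun h => by rw [h]⟩
  split_ifs with h
  · rw [hcoll.2 h, Set.pair_eq_singleton, Set.ncard_singleton]
  · exact Set.ncard_pair (mt hcoll.1 h)

theorem rwlPrefixCount_cycleGraph {k : ℕ} (hk : k + 1 < n + 2) :
    rwlPrefixCount (cycleGraph (n + 2)) (k + 1) = (n + 2) * 2 ^ k := by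
  induction k with
  | zero => simp [rwlPrefixCount_one]
  | succ k ih =>
    rw [rwlPrefixCount_succ_succ _ (c := 2) fun w hw => ?_, ih (by omega)]
    · ring
    · rw [natCard_outerBoundary_range (by omega) w hw, if_neg (by omega)]

theorem rwlPrefixCount_cycleGraph_self :
    rwlPrefixCount (cycleGraph (n + 2)) (n + 2) = rwlPrefixCount (cycleGraph (n + 2)) (n + 1) := by
  rw [rwlPrefixCount_succ_succ _ (c := 1) fun w hw => ?_, one_mul]
  rw [natCard_outerBoundary_range (by omega) w hw, if_pos rfl]

end Cycle

theorem rwl_cycleGraph (n : ℕ) (hn : 3 ≤ n) :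
    (∀ k : ℕ, 1 ≤ k → k ≤ n - 1 →
      rwlPrefixCount (SimpleGraph.cycleGraph n) k = n * 2 ^ (k - 1)) ∧
    rwlPrefixCount (SimpleGraph.cycleGraph n) n = rwlCount (SimpleGraph.cycleGraph n) ∧
    rwlCount (SimpleGraph.cycleGraph n) = n * 2 ^ (n - 2) := by
  obtain ⟨n, rfl⟩ : ∃ m, n = m + 2 := ⟨n - 2, by omega⟩
  have hprefix (k : ℕ) (hk1 : 1 ≤ k) (hkn : k ≤ n + 2 - 1) :
      rwlPrefixCount (SimpleGraph.cycleGraph (n + 2)) k = (n + 2) * 2 ^ (k - 1) := by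
    obtain ⟨k, rfl⟩ : ∃ j, k = j + 1 := ⟨k - 1, by omega⟩
    exact rwlPrefixCount_cycleGraph (by omega)
  have hfull : rwlCount (SimpleGraph.cycleGraph (n + 2)) =
      rwlPrefixCount (SimpleGraph.cycleGraph (n + 2)) (n + 2) := by
    rw [rwlCount, Fintype.card_fin]
  refine ⟨hprefix, hfull.symm, ?_⟩
  rw [hfull, rwlPrefixCount_cycleGraph_self, hprefix (n + 1) (by omega) (by omega)]
  rfl
end

section
/- For 1 ≤ k ≤ n, the number of disrupted random walk labelings of the path graph P_n satisfies L_k(P_n) = (n - k + 1)·2^{k-1}. -/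
open Finset

namespace RWLPath

def cnt (B : ℕ → Bool) (m : ℕ) : ℕ := ∑ j ∈ Finset.range m, if B j then 1 else 0

lemma cnt_zero (B : ℕ → Bool) : cnt B 0 = 0 := by simp [cnt]

lemma cnt_succ (B : ℕ → Bool) (m : ℕ) :
    cnt B (m + 1) = cnt B m + if B m then 1 else 0 := Finset.sum_range_succ _ _

lemma cnt_succ_true {B : ℕ → Bool} {m : ℕ} (h : B m = true) :
    cnt B (m + 1) = cnt B m + 1 := by rw [cnt_succ, h]; simp

lemma cnt_succ_false {B : ℕ → Bool} {m : ℕ} (h : B m = false) :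
    cnt B (m + 1) = cnt B m := by rw [cnt_succ, h]; simp

lemma cnt_mono (B : ℕ → Bool) {m m' : ℕ} (h : m ≤ m') : cnt B m ≤ cnt B m' :=
  Finset.sum_le_sum_of_subset (Finset.range_subset_range.2 h)

lemma cnt_le_self (B : ℕ → Bool) (m : ℕ) : cnt B m ≤ m := by
  induction m with
  | zero => simp [cnt_zero]
  | succ m ih => rw [cnt_succ]; split <;> omega

lemma sub_cnt_mono (B : ℕ → Bool) {m m' : ℕ} (h : m ≤ m') :
    m - cnt B m ≤ m' - cnt B m' := by
  induction m', h using Nat.le_induction with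
  | base => exact le_refl _
  | succ m' hm ih =>
    have h1 := cnt_succ B m'
    have h2 := cnt_le_self B m'
    split at h1 <;> omega

lemma cnt_congr {B B' : ℕ → Bool} {m : ℕ} (h : ∀ j < m, B j = B' j) :
    cnt B m = cnt B' m := by
  unfold cnt
  exact Finset.sum_congr rfl (fun j hj => by rw [h j (Finset.mem_range.1 hj)])

def sval (v0 : ℕ) (B : ℕ → Bool) (i : ℕ) : ℕ :=
  if i = 0 then v0 else if B (i - 1) then v0 - cnt B i else v0 + (i - cnt B i)

lemma sval_zero (v0 : ℕ) (B : ℕ → Bool) : sval v0 B 0 = v0 := rfl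

lemma sval_succ (v0 : ℕ) (B : ℕ → Bool) (m : ℕ) :
    sval v0 B (m + 1) =
      if B m then v0 - cnt B (m + 1) else v0 + (m + 1 - cnt B (m + 1)) := by
  simp [sval]

lemma sval_succ_true {B : ℕ → Bool} {m : ℕ} (v0 : ℕ) (h : B m = true) :
    sval v0 B (m + 1) = v0 - (cnt B m + 1) := by
  rw [sval_succ, h, cnt_succ_true h]; simp

lemma sval_succ_false {B : ℕ → Bool} {m : ℕ} (v0 : ℕ) (h : B m = false) :
    sval v0 B (m + 1) = v0 + (m + 1 - cnt B m) := by
  rw [sval_succ, h, cnt_succ_false h]; simp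

lemma sval_lt_of_true {B : ℕ → Bool} {m v0 : ℕ} (h : B m = true)
    (hv0 : cnt B (m + 1) ≤ v0) : sval v0 B (m + 1) < v0 := by
  rw [sval_succ_true v0 h]
  rw [cnt_succ_true h] at hv0
  omega

lemma lt_sval_of_false {B : ℕ → Bool} {m v0 : ℕ} (h : B m = false) :
    v0 < sval v0 B (m + 1) := by
  rw [sval_succ_false v0 h]
  have := cnt_le_self B m
  omega

/-- Injectivity of sval on `[0, M]` when `cnt B M ≤ v0`. -/
lemma sval_inj {B : ℕ → Bool} {v0 M : ℕ} (hv0 : cnt B M ≤ v0)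
    {i i' : ℕ} (hii : i < i') (hM : i' ≤ M) :
    sval v0 B i ≠ sval v0 B i' := by
  obtain ⟨m', rfl⟩ : ∃ m', i' = m' + 1 := ⟨i' - 1, by omega⟩
  have hcm' : cnt B (m' + 1) ≤ v0 := le_trans (cnt_mono B hM) hv0
  cases hb' : B m' with
  | true =>
    have h1 : sval v0 B (m' + 1) < v0 := sval_lt_of_true hb' hcm'
    have heq' : sval v0 B (m' + 1) = v0 - (cnt B m' + 1) := sval_succ_true v0 hb'
    have h9 : cnt B (m' + 1) = cnt B m' + 1 := cnt_succ_true hb'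
    rcases Nat.eq_zero_or_pos i with rfl | hi
    · rw [sval_zero]; omega
    · obtain ⟨m, rfl⟩ : ∃ m, i = m + 1 := ⟨i - 1, by omega⟩
      cases hb : B m with
      | true =>
        rw [sval_succ_true v0 hb, heq']
        have h8 : cnt B (m + 1) = cnt B m + 1 := cnt_succ_true hb
        have h10 : cnt B (m + 1) ≤ cnt B m' := cnt_mono B (by omega)
        omega
      | false =>
        have := lt_sval_of_false (v0 := v0) hb
        omega
  | false =>
    have h1 : v0 < sval v0 B (m' + 1) := lt_sval_of_false hb'
    have heq' : sval v0 B (m' + 1) = v0 + (m' + 1 - cnt B m') := sval_succ_false v0 hb'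
    rcases Nat.eq_zero_or_pos i with rfl | hi
    · rw [sval_zero]; omega
    · obtain ⟨m, rfl⟩ : ∃ m, i = m + 1 := ⟨i - 1, by omega⟩
      cases hb : B m with
      | true =>
        have h2 : sval v0 B (m + 1) < v0 :=
          sval_lt_of_true hb (le_trans (cnt_mono B (by omega)) hv0)
        omega
      | false =>
        rw [sval_succ_false v0 hb, heq']
        have h3 : m + 1 - cnt B (m + 1) ≤ m' - cnt B m' := sub_cnt_mono B (by omega)
        have h4 : cnt B (m + 1) = cnt B m := cnt_succ_false hb
        have h5 := cnt_le_self B m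
        have h6 := cnt_le_self B m'
        omega

lemma attain_min (v0 : ℕ) (B : ℕ → Bool) (m : ℕ) :
    ∃ j ≤ m, sval v0 B j = v0 - cnt B m := by
  induction m with
  | zero => exact ⟨0, le_refl _, by simp [sval_zero, cnt_zero]⟩
  | succ m ih =>
    cases hb : B m with
    | true =>
      exact ⟨m + 1, le_refl _, by rw [sval_succ_true v0 hb, cnt_succ_true hb]⟩
    | false =>
      obtain ⟨j, hj, hje⟩ := ih
      exact ⟨j, by omega, by rw [cnt_succ_false hb, hje]⟩
  
lemma attain_max (v0 : ℕ) (B : ℕ → Bool) (m : ℕ) :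
    ∃ j ≤ m, sval v0 B j = v0 + (m - cnt B m) := by
  induction m with
  | zero => exact ⟨0, le_refl _, by simp [sval_zero, cnt_zero]⟩
  | succ m ih =>
    cases hb : B m with
    | false =>
      exact ⟨m + 1, le_refl _,
        by rw [sval_succ_false v0 hb, cnt_succ_false hb]⟩
    | true =>
      obtain ⟨j, hj, hje⟩ := ih
      refine ⟨j, by omega, ?_⟩
      rw [hje, cnt_succ_true hb]
      have := cnt_le_self B m
      congr 1
      omega

lemma sval_le (v0 : ℕ) (B : ℕ → Bool) (i : ℕ) :
    sval v0 B i ≤ v0 + (i - cnt B i) := by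
  rcases Nat.eq_zero_or_pos i with rfl | hi
  · simp [sval_zero]
  · obtain ⟨m, rfl⟩ : ∃ m, i = m + 1 := ⟨i - 1, by omega⟩
    rw [sval_succ]
    split <;> omega

def ext (k : ℕ) (b : Fin (k - 1) → Bool) : ℕ → Bool :=
  fun m => if h : m < k - 1 then b ⟨m, h⟩ else false

variable {n k : ℕ}

lemma sval_bound (hk : 1 ≤ k) (hkn : k ≤ n) {a : ℕ} (ha : a ≤ n - k)
    (B : ℕ → Bool) {i : ℕ} (hi : i ≤ k - 1) :
    sval (a + cnt B (k - 1)) B i < n := by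
  have h1 := sval_le (a + cnt B (k - 1)) B i
  have h2 := sub_cnt_mono B hi
  have h3 := cnt_le_self B (k - 1)
  omega

def Psi (hk : 1 ≤ k) (hkn : k ≤ n) (p : Fin (n - k + 1) × (Fin (k - 1) → Bool)) :
    {v : Fin k → Fin n // IsRWLPrefix (SimpleGraph.pathGraph n) v} := by
  set B := ext k p.2 with hB
  set v0 := p.1.val + cnt B (k - 1) with hv0def
  have ha : p.1.val ≤ n - k := by have := p.1.isLt; omega
  have hv0 : cnt B (k - 1) ≤ v0 := by omega
  refine ⟨fun i => ⟨sval v0 B i.val,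
      sval_bound hk hkn ha B (by have := i.isLt; omega)⟩, ?_, ?_⟩
  · -- injectivity
    intro i i' he
    simp only [Fin.mk.injEq] at he
    by_contra hne
    rcases Ne.lt_or_gt (fun h : (i : Fin k).val = i'.val => hne (Fin.ext h)) with h | h
    · exact sval_inj hv0 h (by have := i'.isLt; omega) he
    · exact sval_inj hv0 h (by have := i.isLt; omega) he.symm
  · -- adjacency
    intro i hi0
    obtain ⟨m, hm⟩ : ∃ m, i.val = m + 1 := ⟨i.val - 1, by omega⟩
    have hmk : m + 1 ≤ k - 1 := by have := i.isLt; omega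
    have hcm1 : cnt B (m + 1) ≤ v0 := le_trans (cnt_mono B hmk) hv0
    cases hb : B m with
    | true =>
      obtain ⟨j0, hj0, hje⟩ := attain_min v0 B m
      refine ⟨⟨j0, by omega⟩, by simp [Fin.lt_def]; omega, ?_⟩
      rw [SimpleGraph.pathGraph_adj]
      right
      show sval v0 B i.val + 1 = sval v0 B j0
      rw [hm, sval_succ_true v0 hb, hje]
      rw [cnt_succ_true hb] at hcm1
      omega
    | false =>
      obtain ⟨j0, hj0, hje⟩ := attain_max v0 B m
      refine ⟨⟨j0, by omega⟩, by simp [Fin.lt_def]; omega, ?_⟩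
      rw [SimpleGraph.pathGraph_adj]
      left
      show sval v0 B j0 + 1 = sval v0 B i.val
      rw [hm, sval_succ_false v0 hb, hje]
      have := cnt_le_self B m
      omega

lemma Psi_val (hk : 1 ≤ k) (hkn : k ≤ n) (p : Fin (n - k + 1) × (Fin (k - 1) → Bool))
    (i : Fin k) :
    ((Psi hk hkn p).1 i).val = sval (p.1.val + cnt (ext k p.2) (k - 1)) (ext k p.2) i.val := rfl

lemma Psi_inj (hk : 1 ≤ k) (hkn : k ≤ n) : Function.Injective (Psi hk hkn) := by
  intro p p' h
  have hval : ∀ i : Fin k,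
      sval (p.1.val + cnt (ext k p.2) (k - 1)) (ext k p.2) i.val =
      sval (p'.1.val + cnt (ext k p'.2) (k - 1)) (ext k p'.2) i.val := by
    intro i
    rw [← Psi_val hk hkn p i, ← Psi_val hk hkn p' i, h]
  set B := ext k p.2 with hB
  set B' := ext k p'.2 with hB'
  set v0 := p.1.val + cnt B (k - 1) with hv0
  set v0' := p'.1.val + cnt B' (k - 1) with hv0'
  have h0 : v0 = v0' := by
    have := hval ⟨0, by omega⟩
    simpa [sval_zero] using this
  have hbits : p.2 = p'.2 := by
    funext j
    have hj1 : j.val + 1 ≤ k - 1 := j.isLt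
    have hv := hval ⟨j.val + 1, by omega⟩
    simp only at hv
    have hBj : B j.val = p.2 j := by
      rw [hB]; unfold ext; rw [dif_pos j.isLt]
    have hBj' : B' j.val = p'.2 j := by
      rw [hB']; unfold ext; rw [dif_pos j.isLt]
    have hc : cnt B (j.val + 1) ≤ v0 := by
      have := cnt_mono B hj1; omega
    have hc' : cnt B' (j.val + 1) ≤ v0' := by
      have := cnt_mono B' hj1; omega
    rw [← hBj, ← hBj']
    cases hb : B j.val with
    | true =>
      cases hb' : B' j.val with
      | true => rfl
      | false =>
        have h1 := sval_lt_of_true hb hc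
        have h2 := lt_sval_of_false (v0 := v0') hb'
        omega
    | false =>
      cases hb' : B' j.val with
      | false => rfl
      | true =>
        have h1 := lt_sval_of_false (v0 := v0) hb
        have h2 := sval_lt_of_true hb' hc'
        omega
  have hBB : B = B' := by rw [hB, hB', hbits]
  have hcnt : cnt B (k - 1) = cnt B' (k - 1) := by rw [hBB]
  have ha : p.1 = p'.1 := by
    apply Fin.ext
    omega
  exact Prod.ext ha hbits

lemma Psi_surj (hk : 1 ≤ k) (hkn : k ≤ n) : Function.Surjective (Psi hk hkn) := by
  rintro ⟨v, hinj, hadj⟩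
  have hk0 : 0 < k := hk
  set v0 : ℕ := (v ⟨0, hk0⟩).val with hv0def
  set B : ℕ → Bool :=
    fun m => if h : m + 1 < k then decide ((v ⟨m + 1, h⟩).val < v0) else false with hBdef
  clear_value v0 B
  -- structure lemma
  have key : ∀ m, m ≤ k - 1 →
      cnt B m ≤ v0 ∧
      (∀ j : Fin k, j.val ≤ m → (v j).val = sval v0 B j.val) ∧
      (∀ x : ℕ, (∃ j : Fin k, j.val ≤ m ∧ (v j).val = x) ↔
        (v0 - cnt B m ≤ x ∧ x ≤ v0 + (m - cnt B m))) := by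
    intro m
    induction m with
    | zero =>
      intro _
      have hx : (v ⟨0, hk0⟩).val = v0 := hv0def.symm
      refine ⟨by simp [cnt_zero], ?_, ?_⟩
      · intro j hj
        have hj0 : j = ⟨0, hk0⟩ := Fin.ext (show j.val = 0 by omega)
        rw [hj0]
        show (v ⟨0, hk0⟩).val = sval v0 B 0
        rw [sval_zero]
        exact hx
      · intro x
        simp only [cnt_zero]
        constructor
        · rintro ⟨j, hj, rfl⟩
          have hj0 : j = ⟨0, hk0⟩ := Fin.ext (show j.val = 0 by omega)
          rw [hj0, hx]
          omega
        · rintro ⟨h1, h2⟩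
          refine ⟨⟨0, hk0⟩, le_refl _, ?_⟩
          rw [hx]
          omega
    | succ m ih =>
      intro hm1
      obtain ⟨ih1, ih2, ih3⟩ := ih (by omega)
      have him : m + 1 < k := by omega
      set i : Fin k := ⟨m + 1, him⟩ with hidef
      obtain ⟨j, hji, hadj'⟩ := hadj i (by simp [hidef])
      rw [SimpleGraph.pathGraph_adj] at hadj'
      have hjm : j.val ≤ m := by
        rw [Fin.lt_def] at hji
        simp [hidef] at hji
        omega
      have hjint : v0 - cnt B m ≤ (v j).val ∧ (v j).val ≤ v0 + (m - cnt B m) :=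
        (ih3 _).1 ⟨j, hjm, rfl⟩
      have hnotin : ¬(v0 - cnt B m ≤ (v i).val ∧ (v i).val ≤ v0 + (m - cnt B m)) := by
        intro hin
        obtain ⟨j', hj'm, hj'e⟩ := (ih3 _).2 hin
        have hj'i : j' = i := hinj (Fin.ext hj'e)
        have : j'.val = m + 1 := by rw [hj'i]
        omega
      have hcm := cnt_le_self B m
      have hcase : (v i).val = v0 + (m - cnt B m) + 1 ∨
          ((v i).val + 1 = v0 - cnt B m ∧ cnt B m + 1 ≤ v0) := by
        omega
      have hBm : B m = decide ((v i).val < v0) := by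
        simp only [hBdef]
        rw [dif_pos him]
      rcases hcase with hmax | ⟨hmin, hcv⟩
      · -- extend to the right
        have hbf : B m = false := by
          rw [hBm, decide_eq_false_iff_not]
          omega
        have hc1 : cnt B (m + 1) = cnt B m := cnt_succ_false hbf
        have hsv : sval v0 B (m + 1) = v0 + (m + 1 - cnt B m) := sval_succ_false v0 hbf
        refine ⟨by omega, ?_, ?_⟩
        · intro j' hj'
          rcases Nat.lt_or_ge j'.val (m + 1) with h | h
          · exact ih2 j' (by omega)
          · have hj'i : j' = i := Fin.ext (by simp [hidef]; omega)
            rw [hj'i]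
            show (v i).val = sval v0 B (m + 1)
            omega
        · intro x
          constructor
          · rintro ⟨j', hj', rfl⟩
            rcases Nat.lt_or_ge j'.val (m + 1) with h | h
            · have := (ih3 _).1 ⟨j', by omega, rfl⟩
              omega
            · have hj'i : j' = i := Fin.ext (by simp [hidef]; omega)
              rw [hj'i]
              omega
          · intro hx
            rcases Nat.lt_or_ge (v0 + (m - cnt B m)) x with h | h
            · exact ⟨i, by simp [hidef], by omega⟩
            · obtain ⟨j', hj', hj'e⟩ := (ih3 x).2 (by omega)
              exact ⟨j', by omega, hj'e⟩
      · -- extend to the left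
        have hbt : B m = true := by
          rw [hBm, decide_eq_true_eq]
          omega
        have hc1 : cnt B (m + 1) = cnt B m + 1 := cnt_succ_true hbt
        have hsv : sval v0 B (m + 1) = v0 - (cnt B m + 1) := sval_succ_true v0 hbt
        refine ⟨by omega, ?_, ?_⟩
        · intro j' hj'
          rcases Nat.lt_or_ge j'.val (m + 1) with h | h
          · exact ih2 j' (by omega)
          · have hj'i : j' = i := Fin.ext (by simp [hidef]; omega)
            rw [hj'i]
            show (v i).val = sval v0 B (m + 1)
            omega
        · intro x
          constructor
          · rintro ⟨j', hj', rfl⟩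
            rcases Nat.lt_or_ge j'.val (m + 1) with h | h
            · have := (ih3 _).1 ⟨j', by omega, rfl⟩
              omega
            · have hj'i : j' = i := Fin.ext (by simp [hidef]; omega)
              rw [hj'i]
              omega
          · intro hx
            rcases Nat.lt_or_ge x (v0 - cnt B m) with h | h
            · exact ⟨i, by simp [hidef], by omega⟩
            · obtain ⟨j', hj', hj'e⟩ := (ih3 x).2 (by omega)
              exact ⟨j', by omega, hj'e⟩
  -- assemble
  obtain ⟨hc, hvals, hint⟩ := key (k - 1) le_rfl
  set t := cnt B (k - 1) with htdef
  clear_value t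
  have htk : t ≤ k - 1 := htdef ▸ cnt_le_self B (k - 1)
  obtain ⟨jmax, hjm, hjme⟩ := (hint (v0 + ((k - 1) - t))).2 (by omega)
  have hmaxlt : v0 + ((k - 1) - t) < n := hjme ▸ (v jmax).isLt
  have ha : v0 - t ≤ n - k := by omega
  refine ⟨(⟨v0 - t, by omega⟩, fun j => B j.val), ?_⟩
  apply Subtype.ext
  funext i
  apply Fin.ext
  rw [Psi_val]
  have hext : ext k (fun j : Fin (k - 1) => B j.val) = B := by
    funext m
    unfold ext
    by_cases h : m < k - 1
    · rw [dif_pos h]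
    · rw [dif_neg h]
      symm
      simp only [hBdef]
      rw [dif_neg (by omega)]
  rw [hext]
  show sval ((v0 - t) + cnt B (k - 1)) B i.val = (v i).val
  rw [show (v0 - t) + cnt B (k - 1) = v0 by omega]
  exact (hvals i (by have := i.isLt; omega)).symm

end RWLPath

theorem rwlPrefixCount_pathGraph (n k : ℕ) (hk : 1 ≤ k) (hkn : k ≤ n) :
    rwlPrefixCount (SimpleGraph.pathGraph n) k = (n - k + 1) * 2 ^ (k - 1) := by
  have e := Equiv.ofBijective _ ⟨RWLPath.Psi_inj hk hkn, RWLPath.Psi_surj hk hkn⟩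
  unfold rwlPrefixCount
  rw [← Nat.card_congr e]
  simp [Nat.card_eq_fintype_card, Fintype.card_fun]
end

section
/- For n ≥ 2, the number of random walk labelings of the fan graph F_{n+1} on n+1 vertices is L(F_{n+1}) = n! + \sum_{k=0}^{n-1} (n-k)!\,2^{k}. -/
open Finset

/-- The fan graph `F_{n+1}`: the cone over the path graph `P_n`. -/
def fanGraph (n : ℕ) : SimpleGraph (Option (Fin n)) :=
  (SimpleGraph.pathGraph n).cone

namespace FanProof


section cnt
variable {s : ℕ}

def cnt (q : Fin s → Bool) (j : ℕ) : ℕ :=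
  ((Finset.univ : Finset (Fin s)).filter fun i => i.1 < j ∧ q i = true).card

lemma cnt_zero (q : Fin s → Bool) : cnt q 0 = 0 := by simp [cnt]

lemma cnt_succ (q : Fin s → Bool) {j : ℕ} (h : j < s) :
    cnt q (j + 1) = cnt q j + if q ⟨j, h⟩ = true then 1 else 0 := by
  unfold cnt
  by_cases hq : q ⟨j, h⟩ = true
  · rw [if_pos hq]
    have he : ((Finset.univ : Finset (Fin s)).filter fun i => i.1 < j + 1 ∧ q i = true)
        = insert ⟨j, h⟩ ((Finset.univ : Finset (Fin s)).filter fun i => i.1 < j ∧ q i = true) := by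
      ext i
      simp only [mem_filter, mem_univ, true_and, mem_insert]
      constructor
      · rintro ⟨h1, h2⟩
        rcases Nat.lt_succ_iff_lt_or_eq.mp h1 with h3 | h3
        · exact Or.inr ⟨h3, h2⟩
        · exact Or.inl (Fin.ext h3)
      · rintro (rfl | ⟨h1, h2⟩)
        · exact ⟨Nat.lt_succ_self j, hq⟩
        · exact ⟨Nat.lt_succ_of_lt h1, h2⟩
    rw [he, card_insert_of_notMem (by simp)]
  · rw [if_neg hq, add_zero]
    congr 1
    ext i
    simp only [mem_filter, mem_univ, true_and]
    constructor
    · rintro ⟨h1, h2⟩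
      refine ⟨?_, h2⟩
      rcases Nat.lt_succ_iff_lt_or_eq.mp h1 with h3 | h3
      · exact h3
      · exact absurd (by rwa [show i = ⟨j, h⟩ from Fin.ext h3] at h2) hq
    · rintro ⟨h1, h2⟩; exact ⟨Nat.lt_succ_of_lt h1, h2⟩

lemma cnt_of_ge (q : Fin s → Bool) {j : ℕ} (h : s ≤ j) : cnt q j = cnt q s := by
  unfold cnt
  congr 1
  ext i
  simp [i.isLt, Nat.lt_of_lt_of_le i.isLt h]

lemma cnt_mono (q : Fin s → Bool) {j j' : ℕ} (h : j ≤ j') : cnt q j ≤ cnt q j' := by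
  apply card_le_card
  intro i hi
  simp only [mem_filter, mem_univ, true_and] at hi ⊢
  exact ⟨lt_of_lt_of_le hi.1 h, hi.2⟩

lemma cnt_add (c : Fin s → Bool) {j : ℕ} (hj : j ≤ s) :
    cnt c j + cnt (fun i => !c i) j = j := by
  induction j with
  | zero => simp [cnt_zero]
  | succ j ih =>
    have hjs : j < s := hj
    have h1 := cnt_succ c hjs
    have h2 := cnt_succ (fun i => !c i) hjs
    have h3 := ih (le_of_lt hjs)
    by_cases hc : c ⟨j, hjs⟩ = true
    · simp only [hc, if_true, Bool.not_true, if_neg (by simp : ¬((false : Bool) = true))] at h1 h2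
      omega
    · rw [Bool.not_eq_true] at hc
      simp only [hc, Bool.not_false, if_true, if_neg (by simp : ¬((false : Bool) = true))] at h1 h2
      omega

lemma cnt_le_cnt_s (q : Fin s → Bool) (j : ℕ) : cnt q j ≤ cnt q s := by
  rcases le_or_gt j s with h | h
  · exact cnt_mono q h
  · exact le_of_eq (cnt_of_ge q h.le)

lemma cnt_exists_last (q : Fin s → Bool) {j : ℕ} (hj : j ≤ s) (h : 1 ≤ cnt q j) :
    ∃ i : Fin s, i.1 < j ∧ q i = true ∧ cnt q (i.1 + 1) = cnt q j := by
  induction j with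
  | zero => simp [cnt_zero] at h
  | succ j ih =>
    have hjs : j < s := hj
    by_cases hc : q ⟨j, hjs⟩ = true
    · exact ⟨⟨j, hjs⟩, Nat.lt_succ_self j, hc, rfl⟩
    · have heq : cnt q (j + 1) = cnt q j := by rw [cnt_succ q hjs, if_neg hc, add_zero]
      obtain ⟨i, h1, h2, h3⟩ := ih (le_of_lt hjs) (by omega)
      exact ⟨i, Nat.lt_succ_of_lt h1, h2, by omega⟩

end cnt

section W
variable {s : ℕ}

def W (m : ℕ) (c : Fin s → Bool) : ℕ → ℕ
  | 0 => m + cnt c s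
  | (j + 1) =>
    if h : j < s then
      if c ⟨j, h⟩ = true then m + cnt c s - cnt c (j + 1)
      else m + cnt c s + cnt (fun i => !c i) (j + 1)
    else 0

variable {m : ℕ} {c : Fin s → Bool}


lemma cnt_succ_pos (q : Fin s → Bool) {j : ℕ} (h : j < s) (hq : q ⟨j, h⟩ = true) :
    cnt q (j + 1) = cnt q j + 1 := by rw [cnt_succ q h, if_pos hq]

lemma cnt_succ_neg (q : Fin s → Bool) {j : ℕ} (h : j < s) (hq : q ⟨j, h⟩ = false) :
    cnt q (j + 1) = cnt q j := by
  rw [cnt_succ q h, if_neg (by simp [hq]), add_zero]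

lemma W_zero : W m c 0 = m + cnt c s := rfl

lemma W_left {j : ℕ} (h : j < s) (hc : c ⟨j, h⟩ = true) :
    W m c (j + 1) = m + cnt c s - cnt c (j + 1) := by
  simp only [W, dif_pos h, if_pos hc]

lemma W_right {j : ℕ} (h : j < s) (hc : c ⟨j, h⟩ = false) :
    W m c (j + 1) = m + cnt c s + cnt (fun i => !c i) (j + 1) := by
  simp only [W, dif_pos h, hc]
  simp

lemma W_bounds {j : ℕ} (hj : j ≤ s) :
    m + cnt c s - cnt c j ≤ W m c j ∧ W m c j ≤ m + cnt c s + cnt (fun i => !c i) j := by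
  match j with
  | 0 => simp [W_zero, cnt_zero]
  | (j + 1) =>
    have h : j < s := hj
    by_cases hc : c ⟨j, h⟩ = true
    · rw [W_left h hc]
      omega
    · rw [Bool.not_eq_true] at hc
      rw [W_right h hc]
      omega

lemma W_succ_lt_iff {j : ℕ} (h : j < s) :
    (W m c (j + 1) < W m c j ↔ c ⟨j, h⟩ = true) := by
  have hb := W_bounds (m := m) (c := c) (le_of_lt h)
  have h1 : cnt c (j + 1) ≤ cnt c s := cnt_le_cnt_s c (j + 1)
  by_cases hc : c ⟨j, h⟩ = true
  · rw [W_left h hc]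
    have h3 := cnt_succ_pos c h hc
    simp only [hc, iff_true]
    omega
  · rw [Bool.not_eq_true] at hc
    rw [W_right h hc]
    have h4 := cnt_succ_pos (fun i => !c i) h (by simp [hc])
    simp only [hc, Bool.false_eq_true, iff_false, not_lt]
    omega

lemma W_ne {j j' : ℕ} (hj' : j' ≤ s) (h : j < j') : W m c j ≠ W m c j' := by
  obtain ⟨k, rfl⟩ : ∃ k, j' = k + 1 := ⟨j' - 1, by omega⟩
  have hk : k < s := hj'
  have hjk : j ≤ k := by omega
  have hbj := W_bounds (m := m) (c := c) (show j ≤ s by omega)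
  have h5 : cnt c (k + 1) ≤ cnt c s := cnt_le_cnt_s c (k + 1)
  have h6 : cnt c j ≤ cnt c k := cnt_mono c hjk
  have h7 : cnt (fun i => !c i) j ≤ cnt (fun i => !c i) k := cnt_mono _ hjk
  by_cases hc : c ⟨k, hk⟩ = true
  · rw [W_left hk hc]
    have h3 := cnt_succ_pos c hk hc
    omega
  · rw [Bool.not_eq_true] at hc
    rw [W_right hk hc]
    have h4 := cnt_succ_pos (fun i => !c i) hk (by simp [hc])
    omega

lemma W_lt {n : ℕ} (hm : m + s < n) {j : ℕ} (hj : j ≤ s) : W m c j < n := by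
  have hb := (W_bounds (m := m) (c := c) hj).2
  have h1 := cnt_add c (le_refl s)
  have h2 : cnt (fun i => !c i) j ≤ cnt (fun i => !c i) s := cnt_le_cnt_s _ j
  omega

lemma W_adj {j : ℕ} (h : j < s) :
    ∃ i : ℕ, i < j + 1 ∧ (W m c i = W m c (j + 1) + 1 ∨ W m c (j + 1) = W m c i + 1) := by
  have hcf := cnt_add c (le_refl s)
  by_cases hc : c ⟨j, h⟩ = true
  · -- left step
    rw [W_left h hc]
    have h3 := cnt_succ_pos c h hc
    have h5 : cnt c (j + 1) ≤ cnt c s := cnt_le_cnt_s c (j + 1)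
    by_cases h0 : cnt c j = 0
    · refine ⟨0, by omega, Or.inl ?_⟩
      rw [W_zero]; omega
    · obtain ⟨i, h1, h2, h3'⟩ := cnt_exists_last c (le_of_lt h) (by omega)
      have hci' : c ⟨i.1, i.isLt⟩ = true := by rwa [Fin.eta]
      refine ⟨i.1 + 1, by omega, Or.inl ?_⟩
      rw [W_left i.isLt hci']
      omega
  · -- right step
    rw [Bool.not_eq_true] at hc
    rw [W_right h hc]
    have h4 := cnt_succ_pos (fun i => !c i) h (by simp [hc])
    by_cases h0 : cnt (fun i => !c i) j = 0
    · refine ⟨0, by omega, Or.inr ?_⟩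
      rw [W_zero]; omega
    · obtain ⟨i, h1, h2, h3'⟩ := cnt_exists_last (fun i => !c i) (le_of_lt h) (by omega)
      have hci : c i = false := by simpa using h2
      have hci' : c ⟨i.1, i.isLt⟩ = false := by rwa [Fin.eta]
      refine ⟨i.1 + 1, by omega, Or.inr ?_⟩
      rw [W_right i.isLt hci']
      omega

end W

lemma pp_structure {n s : ℕ} (v : Fin (s + 1) → Fin n)
    (hinj : Function.Injective v)
    (hadj : ∀ i : Fin (s + 1), i.1 ≠ 0 →
      ∃ j : Fin (s + 1), j < i ∧ (SimpleGraph.pathGraph n).Adj (v j) (v i)) :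
    ∃ (m : ℕ) (c : Fin s → Bool), m < n - s ∧ ∀ j : Fin (s + 1), (v j).1 = W m c j.1 := by
  classical
  set c : Fin s → Bool := fun i => decide ((v i.succ).1 < (v i.castSucc).1) with hc_def
  have main : ∀ j, j ≤ s →
      (cnt c j ≤ (v 0).1) ∧
      (∀ i : Fin (s + 1), i.1 ≤ j →
        (v 0).1 - cnt c j ≤ (v i).1 ∧ (v i).1 ≤ (v 0).1 + cnt (fun i => !c i) j) ∧
      (∀ x : ℕ, (v 0).1 - cnt c j ≤ x → x ≤ (v 0).1 + cnt (fun i => !c i) j →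
        ∃ i : Fin (s + 1), i.1 ≤ j ∧ (v i).1 = x) ∧
      (∀ i : Fin s, i.1 < j →
        (c i = true → (v i.succ).1 + cnt c (i.1 + 1) = (v 0).1) ∧
        (c i = false → (v i.succ).1 = (v 0).1 + cnt (fun i => !c i) (i.1 + 1))) := by
    intro j
    induction j with
    | zero =>
      intro _
      refine ⟨by simp [cnt_zero], ?_, ?_, ?_⟩
      · intro i hi
        have hi0 : i = 0 := by
          apply Fin.ext
          simp only [Fin.val_zero]
          omega
        subst hi0
        simp [cnt_zero]
      · intro x h1 h2
        refine ⟨0, le_refl 0, ?_⟩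
        simp only [cnt_zero] at h1 h2
        omega
      · intro i hi
        exact absurd hi (Nat.not_lt_zero _)
    | succ j ih =>
      intro hj1
      have hjs : j < s := hj1
      obtain ⟨ih1, ih2, ih3, ih4⟩ := ih (by omega)
      set J : Fin (s + 1) := ⟨j + 1, by omega⟩ with hJ
      have hJ1 : J.1 = j + 1 := rfl
      obtain ⟨jj, hjj_lt, hadjj⟩ := hadj J (by simp [hJ])
      rw [SimpleGraph.pathGraph_adj] at hadjj
      have hjj_le : jj.1 ≤ j := by
        have := Fin.lt_def.mp hjj_lt
        omega
      have hbj := ih2 jj hjj_le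
      have hnotin : ¬ ((v 0).1 - cnt c j ≤ (v J).1 ∧
          (v J).1 ≤ (v 0).1 + cnt (fun i => !c i) j) := by
        rintro ⟨ha, hb⟩
        obtain ⟨i, hi, hvi⟩ := ih3 _ ha hb
        have heq : i = J := hinj (Fin.ext hvi)
        rw [heq, hJ1] at hi
        omega
      have hsuccJ : (⟨j, hjs⟩ : Fin s).succ = J := rfl
      have hcastJ : ((⟨j, hjs⟩ : Fin s).castSucc : Fin (s + 1)) = ⟨j, by omega⟩ := rfl
      have hvj_bounds := ih2 ⟨j, by omega⟩ (le_refl j)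
      by_cases hcase : (v J).1 ≤ (v 0).1 + cnt (fun i => !c i) j
      · -- left step
        have hxlt : (v J).1 < (v 0).1 - cnt c j := by
          by_contra hx
          exact hnotin ⟨not_lt.mp hx, hcase⟩
        have hLeft : (v J).1 + 1 = (v 0).1 - cnt c j := by
          rcases hadjj with h' | h'
          · exfalso; have := hbj.1; omega
          · have := hbj.1; omega
        have hcj : c ⟨j, hjs⟩ = true := by
          rw [hc_def]
          simp only [decide_eq_true_eq]
          rw [hsuccJ, hcastJ]
          have h0 := hvj_bounds.1
          omega
        have hct := cnt_succ_pos c hjs hcj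
        have hcf := cnt_succ_neg (fun i => !c i) hjs (by simp [hcj])
        have hlo_pos : cnt c j < (v 0).1 := by omega
        refine ⟨by omega, ?_, ?_, ?_⟩
        · intro i hi
          rcases (by omega : i.1 ≤ j ∨ i.1 = j + 1) with hi' | hi'
          · have := ih2 i hi'
            omega
          · have heq : i = J := Fin.ext (by rw [hJ1]; exact hi')
            rw [heq]
            omega
        · intro x h1 h2
          by_cases hx : (v 0).1 - cnt c j ≤ x
          · obtain ⟨i, hi, hvi⟩ := ih3 x hx (by omega)
            exact ⟨i, by omega, hvi⟩
          · refine ⟨J, by rw [hJ1], ?_⟩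
            omega
        · intro i hi
          rcases (by omega : i.1 < j ∨ i.1 = j) with hi' | hi'
          · exact ih4 i hi'
          · have heq : i = ⟨j, hjs⟩ := Fin.ext hi'
            subst heq
            constructor
            · intro _
              rw [hsuccJ]
              have hmk : (⟨j, hjs⟩ : Fin s).1 = j := rfl
              rw [hmk]
              omega
            · intro hfalse
              rw [hcj] at hfalse
              exact absurd hfalse (by simp)
      · -- right step
        push_neg at hcase
        have hRight : (v J).1 = (v 0).1 + cnt (fun i => !c i) j + 1 := by
          rcases hadjj with h' | h'
          · have := hbj.2; omega
          · exfalso; have := hbj.2; omega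
        have hcj : c ⟨j, hjs⟩ = false := by
          rw [hc_def]
          simp only [decide_eq_false_iff_not, not_lt]
          rw [hsuccJ, hcastJ]
          have h0 := hvj_bounds.2
          omega
        have hct := cnt_succ_neg c hjs hcj
        have hcf := cnt_succ_pos (fun i => !c i) hjs (by simp [hcj])
        refine ⟨by omega, ?_, ?_, ?_⟩
        · intro i hi
          rcases (by omega : i.1 ≤ j ∨ i.1 = j + 1) with hi' | hi'
          · have := ih2 i hi'
            omega
          · have heq : i = J := Fin.ext (by rw [hJ1]; exact hi')
            rw [heq]
            omega
        · intro x h1 h2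
          by_cases hx : x ≤ (v 0).1 + cnt (fun i => !c i) j
          · obtain ⟨i, hi, hvi⟩ := ih3 x (by omega) hx
            exact ⟨i, by omega, hvi⟩
          · refine ⟨J, by rw [hJ1], ?_⟩
            omega
        · intro i hi
          rcases (by omega : i.1 < j ∨ i.1 = j) with hi' | hi'
          · exact ih4 i hi'
          · have heq : i = ⟨j, hjs⟩ := Fin.ext hi'
            subst heq
            constructor
            · intro htrue
              rw [hcj] at htrue
              exact absurd htrue (by simp)
            · intro _
              rw [hsuccJ]
              have hmk : (⟨j, hjs⟩ : Fin s).1 = j := rfl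
              rw [hmk]
              omega
  obtain ⟨h1s, h2s, h3s, h4s⟩ := main s (le_refl s)
  have hsum := cnt_add c (le_refl s)
  obtain ⟨imax, _, hmax⟩ := h3s ((v 0).1 + cnt (fun i => !c i) s) (by omega) (le_refl _)
  have hmax_lt : (v 0).1 + cnt (fun i => !c i) s < n := hmax ▸ (v imax).isLt
  refine ⟨(v 0).1 - cnt c s, c, by omega, ?_⟩
  rintro ⟨jv, hjv⟩
  match jv, hjv with
  | 0, hjv =>
    have h0 : (⟨0, hjv⟩ : Fin (s + 1)) = 0 := Fin.ext rfl
    rw [h0]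
    simp only [Fin.val_zero]
    rw [W_zero]
    omega
  | (i + 1), hjv =>
    have his : i < s := by omega
    have hend := h4s ⟨i, his⟩ his
    have hsucc : (⟨i, his⟩ : Fin s).succ = ⟨i + 1, hjv⟩ := rfl
    have hctle : cnt c (i + 1) ≤ cnt c s := cnt_le_cnt_s c (i + 1)
    have hcfle : cnt (fun i => !c i) (i + 1) ≤ cnt (fun i => !c i) s := cnt_le_cnt_s _ _
    by_cases hc : c ⟨i, his⟩ = true
    · have hmkv : (⟨i + 1, hjv⟩ : Fin (s + 1)).1 = i + 1 := rfl
      rw [hmkv, W_left his hc]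
      have hval := hend.1 hc
      rw [hsucc] at hval
      have hmk : (⟨i, his⟩ : Fin s).1 = i := rfl
      rw [hmk] at hval
      omega
    · rw [Bool.not_eq_true] at hc
      have hmkv : (⟨i + 1, hjv⟩ : Fin (s + 1)).1 = i + 1 := rfl
      rw [hmkv, W_right his hc]
      have hval := hend.2 hc
      rw [hsucc] at hval
      have hmk : (⟨i, his⟩ : Fin s).1 = i := rfl
      rw [hmk] at hval
      omega

lemma decode_mem {n s : ℕ} (m : ℕ) (c : Fin s → Bool)
    (hb : ∀ j : Fin (s + 1), W m c j.1 < n) :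
    IsRWLPrefix (SimpleGraph.pathGraph n) (fun j : Fin (s + 1) => (⟨W m c j.1, hb j⟩ : Fin n)) := by
  constructor
  · intro a b hab
    have hW : W m c a.1 = W m c b.1 := congrArg Fin.val hab
    by_contra hne
    have hne' : a.1 ≠ b.1 := fun h => hne (Fin.ext h)
    rcases Nat.lt_or_ge a.1 b.1 with h | h
    · exact W_ne (by omega : b.1 ≤ s) h hW
    · exact W_ne (by omega : a.1 ≤ s) (by omega) hW.symm
  · intro i hi
    obtain ⟨jv, hjveq⟩ : ∃ jv, i.1 = jv + 1 := ⟨i.1 - 1, by omega⟩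
    have hjvs : jv < s := by have := i.isLt; omega
    obtain ⟨i', hi'lt, hor⟩ := W_adj (m := m) (c := c) hjvs
    have hi's : i' < s + 1 := by omega
    refine ⟨⟨i', hi's⟩, ?_, ?_⟩
    · rw [Fin.lt_def]
      have hmk : (⟨i', hi's⟩ : Fin (s + 1)).1 = i' := rfl
      rw [hmk]
      omega
    · rw [SimpleGraph.pathGraph_adj]
      have hmk : (⟨i', hi's⟩ : Fin (s + 1)).1 = i' := rfl
      simp only [hmk, hjveq]
      rcases hor with h' | h'
      · exact Or.inr (by omega)
      · exact Or.inl (by omega)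

theorem card_pp_succ {n s : ℕ} (hs : s < n) :
    Nat.card {p : Fin (s + 1) → Fin n // IsRWLPrefix (SimpleGraph.pathGraph n) p}
      = (n - s) * 2 ^ s := by
  have hb : ∀ (m : Fin (n - s)) (c : Fin s → Bool) (j : Fin (s + 1)), W m.1 c j.1 < n := by
    intro m c j
    have hm := m.2
    exact W_lt (by omega) (by omega : j.1 ≤ s)
  let f : Fin (n - s) × (Fin s → Bool) →
      {p : Fin (s + 1) → Fin n // IsRWLPrefix (SimpleGraph.pathGraph n) p} :=
    fun mc => ⟨fun j => ⟨W mc.1.1 mc.2 j.1, hb mc.1 mc.2 j⟩, decode_mem mc.1.1 mc.2 (hb mc.1 mc.2)⟩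
  have hinj : Function.Injective f := by
    rintro ⟨m, c⟩ ⟨m', c'⟩ h
    have hW : ∀ j : Fin (s + 1), W m.1 c j.1 = W m'.1 c' j.1 := by
      intro j
      exact congrArg Fin.val (congrFun (congrArg Subtype.val h) j)
    have hWn : ∀ jv : ℕ, jv ≤ s → W m.1 c jv = W m'.1 c' jv := by
      intro jv hjv
      exact hW ⟨jv, by omega⟩
    have hc : c = c' := by
      funext i
      have h1 := W_succ_lt_iff (m := m.1) (c := c) i.isLt
      have h2 := W_succ_lt_iff (m := m'.1) (c := c') i.isLt
      rw [Fin.eta] at h1 h2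
      rw [hWn (i.1 + 1) (by omega), hWn i.1 (by omega)] at h1
      have hiff : (c i = true) ↔ (c' i = true) := h1.symm.trans h2
      rcases Bool.eq_false_or_eq_true (c i) with hci | hci <;>
        rcases Bool.eq_false_or_eq_true (c' i) with hci' | hci' <;>
        simp_all
    subst hc
    have hm : m = m' := by
      have h0 := hWn 0 (by omega)
      rw [W_zero, W_zero] at h0
      exact Fin.ext (by omega)
    rw [hm]
  have hsurj : Function.Surjective f := by
    rintro ⟨v, hv⟩
    obtain ⟨m, c, hm, hvals⟩ := pp_structure v hv.1 hv.2
    refine ⟨⟨⟨m, hm⟩, c⟩, ?_⟩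
    apply Subtype.ext
    funext j
    apply Fin.ext
    exact (hvals j).symm
  rw [← Nat.card_eq_of_bijective f ⟨hinj, hsurj⟩]
  simp [Nat.card_eq_fintype_card]

lemma card_pp_zero {n : ℕ} :
    Nat.card {p : Fin 0 → Fin n // IsRWLPrefix (SimpleGraph.pathGraph n) p} = 1 := by
  have hu : Unique {p : Fin 0 → Fin n // IsRWLPrefix (SimpleGraph.pathGraph n) p} :=
    { default := ⟨Fin.elim0, ⟨fun a _ _ => a.elim0, fun i => i.elim0⟩⟩
      uniq := fun p => Subtype.ext (funext fun i => i.elim0) }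
  exact Nat.card_unique
section Fan
variable {n : ℕ}

lemma fan_adj_none_some (x : Fin n) : (fanGraph n).Adj none (some x) := by
  rw [fanGraph, SimpleGraph.cone, SimpleGraph.fromRel_adj]
  exact ⟨by simp, Or.inl trivial⟩

lemma fan_adj_some_none (x : Fin n) : (fanGraph n).Adj (some x) none :=
  (fan_adj_none_some x).symm

lemma fan_adj_some_some {x y : Fin n} :
    (fanGraph n).Adj (some x) (some y) ↔ (SimpleGraph.pathGraph n).Adj x y := by
  rw [fanGraph, SimpleGraph.cone, SimpleGraph.fromRel_adj]
  constructor
  · rintro ⟨h, h1 | h1⟩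
    · exact h1
    · exact h1.symm
  · intro h
    exact ⟨by simpa using h.ne, Or.inl h⟩

/-- glue a path prefix, the hub, and a suffix into a labeling of the fan. -/
def glue (t : ℕ) (p : Fin t → Fin n) (s' : Fin (n - t) → Fin n) :
    Fin (n + 1) → Option (Fin n) :=
  fun i =>
    if h : i.1 < t then some (p ⟨i.1, h⟩)
    else if h2 : i.1 = t then none
    else some (s' ⟨i.1 - t - 1, by have := i.isLt; omega⟩)

lemma glue_lt {t : ℕ} {p : Fin t → Fin n} {s' : Fin (n - t) → Fin n} {i : Fin (n + 1)}
    (h : i.1 < t) : glue t p s' i = some (p ⟨i.1, h⟩) := by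
  unfold glue; rw [dif_pos h]

lemma glue_eq {t : ℕ} {p : Fin t → Fin n} {s' : Fin (n - t) → Fin n} {i : Fin (n + 1)}
    (h : i.1 = t) : glue t p s' i = none := by
  unfold glue; rw [dif_neg (by omega), dif_pos h]

lemma glue_gt {t : ℕ} {p : Fin t → Fin n} {s' : Fin (n - t) → Fin n} {i : Fin (n + 1)}
    (h : t < i.1) :
    glue t p s' i = some (s' ⟨i.1 - t - 1, by have := i.isLt; omega⟩) := by
  unfold glue; rw [dif_neg (by omega), dif_neg (by omega)]

lemma glue_mem (t : ℕ) (ht : t ≤ n) (p : Fin t → Fin n) (s' : Fin (n - t) → Fin n)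
    (hp : IsRWLPrefix (SimpleGraph.pathGraph n) p)
    (hs' : Function.Injective s') (hd : ∀ j i, s' j ≠ p i) :
    IsRWLPrefix (fanGraph n) (glue t p s') ∧ glue t p s' ⟨t, by omega⟩ = none := by
  refine ⟨⟨?_, ?_⟩, ?_⟩
  · -- injective
    intro a b hab
    apply Fin.ext
    rcases lt_trichotomy a.1 t with ha | ha | ha <;>
      rcases lt_trichotomy b.1 t with hb | hb | hb
    · rw [glue_lt ha, glue_lt hb, Option.some.injEq] at hab
      have h2 := hp.1 hab
      rw [Fin.mk.injEq] at h2
      exact h2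
    · rw [glue_lt ha, glue_eq hb] at hab
      exact absurd hab (by simp)
    · rw [glue_lt ha, glue_gt hb, Option.some.injEq] at hab
      exact absurd hab.symm (hd _ _)
    · rw [glue_eq ha, glue_lt hb] at hab
      exact absurd hab.symm (by simp)
    · omega
    · rw [glue_eq ha, glue_gt hb] at hab
      exact absurd hab.symm (by simp)
    · rw [glue_gt ha, glue_lt hb, Option.some.injEq] at hab
      exact absurd hab (hd _ _)
    · rw [glue_gt ha, glue_eq hb] at hab
      exact absurd hab (by simp)
    · rw [glue_gt ha, glue_gt hb, Option.some.injEq] at hab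
      have h2 := hs' hab
      rw [Fin.mk.injEq] at h2
      omega
  · -- adjacency
    intro i hi
    rcases lt_trichotomy i.1 t with hlt | heq | hgt
    · obtain ⟨j, hj, hadj⟩ := hp.2 ⟨i.1, hlt⟩ hi
      have hjlt : j.1 < t := j.isLt
      refine ⟨⟨j.1, by omega⟩, ?_, ?_⟩
      · show (j.1 : ℕ) < i.1
        exact hj
      · rw [show (⟨j.1, by omega⟩ : Fin (n + 1)) = ⟨j.1, by omega⟩ from rfl,
          glue_lt (show (⟨j.1, by omega⟩ : Fin (n + 1)).1 < t from hjlt), glue_lt hlt,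
          fan_adj_some_some]
        exact hadj
    · -- i is the hub
      have ht0 : 0 < t := by omega
      refine ⟨⟨0, by omega⟩, ?_, ?_⟩
      · show (0 : ℕ) < i.1
        omega
      · rw [glue_lt (show (⟨0, by omega⟩ : Fin (n + 1)).1 < t from ht0), glue_eq heq]
        exact fan_adj_some_none _
    · refine ⟨⟨t, by omega⟩, ?_, ?_⟩
      · show (t : ℕ) < i.1
        exact hgt
      · rw [glue_eq (show (⟨t, by omega⟩ : Fin (n + 1)).1 = t from rfl), glue_gt hgt]
        exact fan_adj_none_some _
  · exact glue_eq rfl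

lemma glue_at_prefix {t : ℕ} {p : Fin t → Fin n} {s' : Fin (n - t) → Fin n}
    {i : Fin (n + 1)} (j : Fin t) (hij : i.1 = j.1) :
    glue t p s' i = some (p j) := by
  have h : i.1 < t := by have := j.2; omega
  rw [glue_lt h]
  exact congrArg (fun k => some (p k)) (Fin.ext hij)

lemma glue_at_suffix {t : ℕ} {p : Fin t → Fin n} {s' : Fin (n - t) → Fin n}
    {i : Fin (n + 1)} (j : Fin (n - t)) (hij : i.1 = t + 1 + j.1) :
    glue t p s' i = some (s' j) := by
  rw [glue_gt (show t < i.1 by omega)]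
  refine congrArg (fun k => some (s' k)) (Fin.ext ?_)
  show i.1 - t - 1 = j.1
  omega

lemma card_B (t : ℕ) (ht : t ≤ n) :
    Nat.card {v : Fin (n + 1) → Option (Fin n) //
        IsRWLPrefix (fanGraph n) v ∧ v ⟨t, by omega⟩ = none}
      = Nat.card {p : Fin t → Fin n // IsRWLPrefix (SimpleGraph.pathGraph n) p}
        * (n - t).factorial := by
  classical
  set PP := {p : Fin t → Fin n // IsRWLPrefix (SimpleGraph.pathGraph n) p} with hPP
  let F : (Σ p : PP, (Fin (n - t) ↪ ((Set.range p.1)ᶜ : Set (Fin n)))) →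
      {v : Fin (n + 1) → Option (Fin n) //
        IsRWLPrefix (fanGraph n) v ∧ v ⟨t, by omega⟩ = none} :=
    fun ps => ⟨glue t ps.1.1 (fun j => (ps.2 j).1),
      glue_mem t ht ps.1.1 _ ps.1.2
        (fun a b hab => ps.2.injective (Subtype.ext hab))
        (fun j i hji => (ps.2 j).2 ⟨i, hji.symm⟩)⟩
  have Finj : Function.Injective F := by
    rintro ⟨⟨p, hp⟩, s1⟩ ⟨⟨q, hq⟩, s2⟩ h
    have hval : ∀ i : Fin (n + 1),
        glue t p (fun j => (s1 j).1) i = glue t q (fun j => (s2 j).1) i :=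
      fun i => congrFun (congrArg Subtype.val h) i
    have hpq : p = q := by
      funext i
      have hlt : i.1 < n + 1 := by have := i.2; omega
      have h1 := hval ⟨i.1, hlt⟩
      rw [glue_at_prefix i rfl, glue_at_prefix i rfl, Option.some.injEq] at h1
      exact h1
    subst hpq
    have hs : s1 = s2 := by
      ext j
      have hlt : t + 1 + j.1 < n + 1 := by have := j.2; omega
      have h1 := hval ⟨t + 1 + j.1, hlt⟩
      rw [glue_at_suffix j rfl, glue_at_suffix j rfl, Option.some.injEq] at h1
      exact congrArg Fin.val h1
    subst hs
    rfl
  have Fsurj : Function.Surjective F := by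
    rintro ⟨v, hv, hvt⟩
    have hsome : ∀ i : Fin (n + 1), i.1 ≠ t → (v i).isSome := by
      intro i hi
      rcases hvi : v i with _ | x
      · exfalso
        have heq : i = ⟨t, by omega⟩ := hv.1 (hvi.trans hvt.symm)
        rw [heq] at hi
        exact hi rfl
      · rfl
    let p : Fin t → Fin n := fun i =>
      (v ⟨i.1, by have := i.2; omega⟩).get
        (hsome _ (by show i.1 ≠ t; have := i.2; omega))
    let s0 : Fin (n - t) → Fin n := fun j =>
      (v ⟨t + 1 + j.1, by have := j.2; omega⟩).get
        (hsome _ (by show t + 1 + j.1 ≠ t; omega))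
    have hvp : ∀ (i : Fin t) (ii : Fin (n + 1)), ii.1 = i.1 → v ii = some (p i) := by
      intro i ii hii
      have heq : ii = ⟨i.1, by have := i.2; omega⟩ := Fin.ext hii
      rw [heq]
      exact (Option.some_get _).symm
    have hvs : ∀ (j : Fin (n - t)) (ii : Fin (n + 1)), ii.1 = t + 1 + j.1 →
        v ii = some (s0 j) := by
      intro j ii hii
      have heq : ii = ⟨t + 1 + j.1, by have := j.2; omega⟩ := Fin.ext hii
      rw [heq]
      exact (Option.some_get _).symm
    have hp_inj : Function.Injective p := by
      intro a b hab
      have h1 : v ⟨a.1, by have := a.2; omega⟩ = some (p a) := hvp a _ rfl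
      have h2 : v ⟨b.1, by have := b.2; omega⟩ = some (p b) := hvp b _ rfl
      have h3 := hv.1 (h1.trans (by rw [hab, h2]))
      rw [Fin.mk.injEq] at h3
      exact Fin.ext h3
    have hp_adj : ∀ i : Fin t, i.1 ≠ 0 →
        ∃ j : Fin t, j < i ∧ (SimpleGraph.pathGraph n).Adj (p j) (p i) := by
      intro i hi
      obtain ⟨jj, hjj, hadj⟩ := hv.2 ⟨i.1, by have := i.2; omega⟩ (by show i.1 ≠ 0; exact hi)
      have hjjt : jj.1 < t := by
        have : jj.1 < i.1 := hjj
        have := i.2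
        omega
      have e1 : v jj = some (p ⟨jj.1, hjjt⟩) := hvp ⟨jj.1, hjjt⟩ jj rfl
      have e2 : v ⟨i.1, by have := i.2; omega⟩ = some (p i) := hvp i _ rfl
      rw [e1, e2, fan_adj_some_some] at hadj
      exact ⟨⟨jj.1, hjjt⟩, (by show jj.1 < i.1; exact hjj), hadj⟩
    have hmem : ∀ j : Fin (n - t), s0 j ∈ ((Set.range p)ᶜ : Set (Fin n)) := by
      intro j
      rintro ⟨i, hpi⟩
      have h1 : v ⟨i.1, by have := i.2; omega⟩ = some (p i) := hvp i _ rfl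
      have h2 : v ⟨t + 1 + j.1, by have := j.2; omega⟩ = some (s0 j) := hvs j _ rfl
      have h3 := hv.1 (h1.trans (by rw [hpi, h2]))
      rw [Fin.mk.injEq] at h3
      have := i.2
      omega
    have hs0_inj : ∀ (a b : Fin (n - t)), s0 a = s0 b → a = b := by
      intro a b hab
      have h1 : v ⟨t + 1 + a.1, by have := a.2; omega⟩ = some (s0 a) := hvs a _ rfl
      have h2 : v ⟨t + 1 + b.1, by have := b.2; omega⟩ = some (s0 b) := hvs b _ rfl
      have h3 := hv.1 (h1.trans (by rw [hab, h2]))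
      rw [Fin.mk.injEq] at h3
      exact Fin.ext (by omega)
    refine ⟨⟨⟨p, hp_inj, hp_adj⟩,
      ⟨fun j => ⟨s0 j, hmem j⟩, fun a b hab => hs0_inj a b (congrArg Subtype.val hab)⟩⟩, ?_⟩
    apply Subtype.ext
    funext i
    show glue t p s0 i = v i
    rcases lt_trichotomy i.1 t with hlt | heq | hgt
    · rw [glue_at_prefix ⟨i.1, hlt⟩ rfl]
      exact (hvp ⟨i.1, hlt⟩ i rfl).symm
    · rw [glue_eq heq]
      have : i = ⟨t, by omega⟩ := Fin.ext heq
      rw [this, hvt]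
    · have hj : i.1 - t - 1 < n - t := by have := i.isLt; omega
      rw [glue_at_suffix ⟨i.1 - t - 1, hj⟩ (by show i.1 = t + 1 + (i.1 - t - 1); omega)]
      exact (hvs ⟨i.1 - t - 1, hj⟩ i (by show i.1 = t + 1 + (i.1 - t - 1); omega)).symm
  rw [← Nat.card_eq_of_bijective F ⟨Finj, Fsurj⟩]
  letI : Fintype PP := Fintype.ofFinite _
  letI : ∀ pp : PP, Fintype ((Set.range pp.1)ᶜ : Set (Fin n)) := fun pp => Fintype.ofFinite _
  letI : ∀ pp : PP, Fintype (Fin (n - t) ↪ ((Set.range pp.1)ᶜ : Set (Fin n))) :=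
    fun pp => Fintype.ofFinite _
  rw [Nat.card_eq_fintype_card, Fintype.card_sigma]
  have hcard : ∀ pp : PP,
      Fintype.card (Fin (n - t) ↪ ((Set.range pp.1)ᶜ : Set (Fin n))) = (n - t).factorial := by
    intro pp
    rw [Fintype.card_embedding_eq]
    have h1 : Fintype.card ((Set.range pp.1)ᶜ : Set (Fin n)) = n - t := by
      letI : Fintype (Set.range pp.1 : Set (Fin n)) := Fintype.ofFinite _
      rw [Fintype.card_compl_set]
      rw [Set.card_range_of_injective pp.2.1]
      simp
    rw [h1, Fintype.card_fin, Nat.descFactorial_self]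
  rw [Finset.sum_congr rfl (fun pp _ => hcard pp), Finset.sum_const, smul_eq_mul,
    Nat.card_eq_fintype_card, Finset.card_univ]

end Fan

end FanProof

open FanProof in
theorem rwlCount_fanGraph (n : ℕ) (hn : 2 ≤ n) :
    rwlCount (fanGraph n) =
      n.factorial + ∑ k ∈ Finset.range n, (n - k).factorial * 2 ^ k := by
  classical
  have hcV : Fintype.card (Option (Fin n)) = n + 1 := by simp
  rw [rwlCount, hcV, rwlPrefixCount]
  set T := {v : Fin (n + 1) → Option (Fin n) // IsRWLPrefix (fanGraph n) v} with hT
  have hbij : ∀ v : T, Function.Bijective v.1 := by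
    intro v
    rw [Fintype.bijective_iff_injective_and_card]
    exact ⟨v.2.1, by simp⟩
  let idx : T → Fin (n + 1) := fun v => (Equiv.ofBijective v.1 (hbij v)).symm none
  have hidx : ∀ v : T, v.1 (idx v) = none := by
    intro v
    show (Equiv.ofBijective v.1 (hbij v)) ((Equiv.ofBijective v.1 (hbij v)).symm none) = none
    exact Equiv.apply_symm_apply _ _
  have hidx_iff : ∀ (v : T) (u : Fin (n + 1)), idx v = u ↔ v.1 u = none := by
    intro v u
    constructor
    · rintro rfl
      exact hidx v
    · intro h
      exact (hbij v).1 ((hidx v).trans h.symm)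
  have key : Nat.card T = ∑ u : Fin (n + 1),
      Nat.card {v : Fin (n + 1) → Option (Fin n) //
        IsRWLPrefix (fanGraph n) v ∧ v u = none} := by
    rw [← Nat.card_congr (Equiv.sigmaFiberEquiv idx)]
    letI : Fintype T := Fintype.ofFinite _
    letI : ∀ u : Fin (n + 1), Fintype {v : T // idx v = u} := fun u => Fintype.ofFinite _
    rw [Nat.card_eq_fintype_card, Fintype.card_sigma]
    apply Finset.sum_congr rfl
    intro u _
    rw [← Nat.card_eq_fintype_card]
    exact Nat.card_congr ((Equiv.subtypeEquivRight (fun v => hidx_iff v u)).trans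
      (Equiv.subtypeSubtypeEquivSubtypeInter
        (fun v : Fin (n + 1) → Option (Fin n) => IsRWLPrefix (fanGraph n) v)
        (fun v => v u = none)))
  rw [key]
  have key2 : ∀ u : Fin (n + 1),
      Nat.card {v : Fin (n + 1) → Option (Fin n) //
        IsRWLPrefix (fanGraph n) v ∧ v u = none}
      = Nat.card {p : Fin u.1 → Fin n // IsRWLPrefix (SimpleGraph.pathGraph n) p}
        * (n - u.1).factorial := by
    intro u
    exact card_B u.1 (Nat.lt_succ_iff.mp u.isLt)
  rw [Finset.sum_congr rfl (fun u _ => key2 u)]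
  have key3 : (∑ u : Fin (n + 1),
      Nat.card {p : Fin u.1 → Fin n // IsRWLPrefix (SimpleGraph.pathGraph n) p}
        * (n - u.1).factorial)
      = ∑ k ∈ Finset.range (n + 1),
        Nat.card {p : Fin k → Fin n // IsRWLPrefix (SimpleGraph.pathGraph n) p}
          * (n - k).factorial :=
    Fin.sum_univ_eq_sum_range (fun k =>
      Nat.card {p : Fin k → Fin n // IsRWLPrefix (SimpleGraph.pathGraph n) p}
        * (n - k).factorial) (n + 1)
  rw [key3, Finset.sum_range_succ']
  have h0 : Nat.card {p : Fin 0 → Fin n // IsRWLPrefix (SimpleGraph.pathGraph n) p}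
      * (n - 0).factorial = n.factorial := by
    rw [card_pp_zero, one_mul, Nat.sub_zero]
  rw [h0]
  have step : ∀ k ∈ Finset.range n,
      Nat.card {p : Fin (k + 1) → Fin n // IsRWLPrefix (SimpleGraph.pathGraph n) p}
        * (n - (k + 1)).factorial = (n - k).factorial * 2 ^ k := by
    intro k hk
    have hkn : k < n := Finset.mem_range.mp hk
    have he : n - k = (n - (k + 1)) + 1 := by
      clear key key2 key3 h0 hidx_iff hidx idx hbij hT
      omega
    rw [card_pp_succ hkn, he, Nat.factorial_succ]
    ring
  rw [Finset.sum_congr rfl step]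
  exact Nat.add_comm _ _
end

section
/- For m, n ≥ 1, the number of random walk labelings of the barbell graph B_{m,n} is L(B_{m,n}) = (m-1)!\,(n-1)!\left(\binom{m+n}{n+1} + \binom{m+n}{m+1}\right). -/
open Finset

/-- The graph obtained from the disjoint union of `G` and `H` by joining the
vertex `a` of `G` to the vertex `b` of `H` by an edge (a bridge). -/
def bridgeJoin {V W : Type*} (G : SimpleGraph V) (H : SimpleGraph W) (a : V) (b : W) :
    SimpleGraph (V ⊕ W) :=
  SimpleGraph.fromRel (fun x y =>
    match x, y with
    | Sum.inl u, Sum.inl v => G.Adj u v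
    | Sum.inr u, Sum.inr v => H.Adj u v
    | Sum.inl u, Sum.inr v => u = a ∧ v = b
    | Sum.inr _, Sum.inl _ => False)

namespace RWLBarbell
open Equiv Sum

variable {a b : ℕ}

def CondA {a b N : ℕ} (f : (Fin (a+1) ⊕ Fin (b+1)) ≃ Fin N) : Prop :=
  f (inl 0) < f (inr 0) ∧ ∀ u : Fin (b+1), u ≠ 0 → f (inr 0) < f (inr u)

section Core

variable (T : Finset (Fin (a+1+(b+1)))) (hT : T.card = b+2)

include hT

lemma Tne : T.Nonempty := Finset.card_pos.mp (by omega)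

def em1 : Fin (a+1+(b+1)) := T.min' (Tne T hT)

lemma em1_mem : em1 T hT ∈ T := T.min'_mem _

def T1 : Finset (Fin (a+1+(b+1))) := T.erase (em1 T hT)

lemma T1card : (T1 T hT).card = b+1 := by
  rw [T1, Finset.card_erase_of_mem (em1_mem T hT), hT]
  omega

lemma T1ne : (T1 T hT).Nonempty := Finset.card_pos.mp (by rw [T1card T hT]; omega)

def em2 : Fin (a+1+(b+1)) := (T1 T hT).min' (T1ne T hT)

lemma em2_mem1 : em2 T hT ∈ T1 T hT := Finset.min'_mem _ _

lemma em2_mem : em2 T hT ∈ T := Finset.mem_of_mem_erase (em2_mem1 T hT)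

lemma em1_lt_em2 : em1 T hT < em2 T hT :=
  Finset.min'_lt_of_mem_erase_min' _ _ (em2_mem1 T hT)

def T2 : Finset (Fin (a+1+(b+1))) := (T1 T hT).erase (em2 T hT)

lemma T2card : (T2 T hT).card = b := by
  rw [T2, Finset.card_erase_of_mem (em2_mem1 T hT), T1card T hT]
  omega

lemma mem_of_mem_T2 {x} (hx : x ∈ T2 T hT) : x ∈ T :=
  Finset.mem_of_mem_erase (Finset.mem_of_mem_erase hx)

lemma ne_em1_of_mem_T2 {x} (hx : x ∈ T2 T hT) : x ≠ em1 T hT :=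
  Finset.ne_of_mem_erase (Finset.mem_of_mem_erase hx)

lemma em2_lt_of_mem_T2 {x} (hx : x ∈ T2 T hT) : em2 T hT < x :=
  Finset.min'_lt_of_mem_erase_min' _ _ hx

lemma complcard : Tᶜ.card = a := by
  rw [Finset.card_compl, hT]
  simp only [Fintype.card_fin]
  omega

def oA : Fin a ≃o ↑(Tᶜ) := Finset.orderIsoOfFin _ (complcard T hT)

def oB : Fin b ≃o ↑(T2 T hT) := Finset.orderIsoOfFin _ (T2card T hT)

lemma oA_notMem (i : Fin a) : (oA T hT i : Fin (a+1+(b+1))) ∉ T := by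
  exact Finset.mem_compl.mp (oA T hT i).2

variable (π : Perm (Fin a)) (ρ : Perm (Fin b))

def bfun : (Fin (a+1) ⊕ Fin (b+1)) → Fin (a+1+(b+1)) :=
  Sum.elim (Fin.cases (em1 T hT) (fun x => (oA T hT (π x) : Fin (a+1+(b+1)))))
           (Fin.cases (em2 T hT) (fun u => (oB T hT (ρ u) : Fin (a+1+(b+1)))))

@[simp] lemma bfun_inl_zero : bfun T hT π ρ (inl 0) = em1 T hT := rfl

@[simp] lemma bfun_inr_zero : bfun T hT π ρ (inr 0) = em2 T hT := rfl

@[simp] lemma bfun_inl_succ (x : Fin a) :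
    bfun T hT π ρ (inl x.succ) = (oA T hT (π x) : Fin (a+1+(b+1))) := by
  simp [bfun]

@[simp] lemma bfun_inr_succ (u : Fin b) :
    bfun T hT π ρ (inr u.succ) = (oB T hT (ρ u) : Fin (a+1+(b+1))) := by
  simp [bfun]

lemma bfun_inj : Function.Injective (bfun T hT π ρ) := by
  have hBmem : ∀ u : Fin b, (oB T hT (ρ u) : Fin (a+1+(b+1))) ∈ T2 T hT := fun u => (oB T hT (ρ u)).2
  intro w w' h
  rcases w with x | u <;> rcases w' with x' | u'
  · induction x using Fin.cases with
    | zero =>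
      induction x' using Fin.cases with
      | zero => rfl
      | succ x' =>
        simp only [bfun_inl_zero, bfun_inl_succ] at h
        exact absurd (h ▸ em1_mem T hT) (oA_notMem T hT (π x'))
    | succ x =>
      induction x' using Fin.cases with
      | zero =>
        simp only [bfun_inl_zero, bfun_inl_succ] at h
        exact absurd (h.symm ▸ em1_mem T hT) (oA_notMem T hT (π x))
      | succ x' =>
        simp only [bfun_inl_succ] at h
        have : π x = π x' := (oA T hT).injective (Subtype.ext h)
        rw [π.injective this]
  · exfalso
    induction x using Fin.cases with
    | zero =>
      induction u' using Fin.cases with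
      | zero => exact absurd (by simpa using h) (ne_of_lt (em1_lt_em2 T hT))
      | succ u' =>
        simp only [bfun_inl_zero, bfun_inr_succ] at h
        exact ne_em1_of_mem_T2 T hT (hBmem u') h.symm
    | succ x =>
      induction u' using Fin.cases with
      | zero =>
        simp only [bfun_inl_succ, bfun_inr_zero] at h
        exact oA_notMem T hT (π x) (h ▸ em2_mem T hT)
      | succ u' =>
        simp only [bfun_inl_succ, bfun_inr_succ] at h
        exact oA_notMem T hT (π x) (h ▸ mem_of_mem_T2 T hT (hBmem u'))
  · exfalso
    induction u using Fin.cases with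
    | zero =>
      induction x' using Fin.cases with
      | zero => exact absurd (by simpa using h) (ne_of_gt (em1_lt_em2 T hT))
      | succ x' =>
        simp only [bfun_inr_zero, bfun_inl_succ] at h
        exact oA_notMem T hT (π x') (h ▸ em2_mem T hT)
    | succ u =>
      induction x' using Fin.cases with
      | zero =>
        simp only [bfun_inr_succ, bfun_inl_zero] at h
        exact ne_em1_of_mem_T2 T hT (hBmem u) h
      | succ x' =>
        simp only [bfun_inr_succ, bfun_inl_succ] at h
        exact oA_notMem T hT (π x') (h.symm ▸ mem_of_mem_T2 T hT (hBmem u))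
  · induction u using Fin.cases with
    | zero =>
      induction u' using Fin.cases with
      | zero => rfl
      | succ u' =>
        simp only [bfun_inr_zero, bfun_inr_succ] at h
        exact absurd h (ne_of_lt (em2_lt_of_mem_T2 T hT (hBmem u')))
    | succ u =>
      induction u' using Fin.cases with
      | zero =>
        simp only [bfun_inr_succ, bfun_inr_zero] at h
        exact absurd h.symm (ne_of_lt (em2_lt_of_mem_T2 T hT (hBmem u)))
      | succ u' =>
        simp only [bfun_inr_succ] at h
        have : ρ u = ρ u' := (oB T hT).injective (Subtype.ext h)
        rw [ρ.injective this]

lemma bfun_bij : Function.Bijective (bfun T hT π ρ) :=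
  (Fintype.bijective_iff_injective_and_card _).mpr ⟨bfun_inj T hT π ρ, by simp⟩

noncomputable def bequiv : (Fin (a+1) ⊕ Fin (b+1)) ≃ Fin (a+1+(b+1)) :=
  Equiv.ofBijective _ (bfun_bij T hT π ρ)

@[simp] lemma bequiv_apply (w) : bequiv T hT π ρ w = bfun T hT π ρ w := rfl

lemma bequiv_condA : CondA (bequiv T hT π ρ) := by
  constructor
  · simpa using em1_lt_em2 T hT
  · intro u hu
    induction u using Fin.cases with
    | zero => exact absurd rfl hu
    | succ u =>
      simpa using em2_lt_of_mem_T2 T hT (oB T hT (ρ u)).2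


lemma compl_eq_image : Tᶜ = Finset.image (fun x : Fin a => bfun T hT π ρ (inl x.succ)) univ := by
  have hinj : Function.Injective (fun x : Fin a => bfun T hT π ρ (inl x.succ)) := by
    intro x y h
    simp only [bfun_inl_succ] at h
    exact π.injective ((oA T hT).injective (Subtype.ext h))
  symm
  apply Finset.eq_of_subset_of_card_le
  · intro y hy
    rw [Finset.mem_image] at hy
    obtain ⟨x, -, rfl⟩ := hy
    simp only [bfun_inl_succ]
    exact Finset.mem_compl.mpr (oA_notMem T hT (π x))
  · rw [Finset.card_image_of_injective _ hinj, Finset.card_univ, Fintype.card_fin,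
      complcard T hT]

end Core

abbrev Target (a b : ℕ) :=
  {T : Finset (Fin (a+1+(b+1))) // T.card = b+2} × Perm (Fin a) × Perm (Fin b)

noncomputable def G (t : Target a b) :
    {f : (Fin (a+1) ⊕ Fin (b+1)) ≃ Fin (a+1+(b+1)) // CondA f} :=
  ⟨bequiv t.1.1 t.1.2 t.2.1 t.2.2, bequiv_condA _ _ _ _⟩

lemma G_inj : Function.Injective (G (a := a) (b := b)) := by
  rintro ⟨⟨T, hT⟩, π, ρ⟩ ⟨⟨T', hT'⟩, π', ρ'⟩ h
  have hfw : ∀ w, bfun T hT π ρ w = bfun T' hT' π' ρ' w := fun w =>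
    DFunLike.congr_fun (Subtype.ext_iff.mp h) w
  have hTT : T = T' := by
    have hc : Tᶜ = T'ᶜ := by
      rw [compl_eq_image T hT π ρ, compl_eq_image T' hT' π' ρ']
      congr 1
      funext x
      exact hfw _
    exact compl_inj_iff.mp hc
  subst hTT
  have hππ : π = π' := by
    ext x
    have hx := hfw (inl x.succ)
    simp only [bfun_inl_succ] at hx
    exact congrArg Fin.val ((oA T hT).injective (Subtype.ext hx))
  have hρρ : ρ = ρ' := by
    ext u
    have hu := hfw (inr u.succ)
    simp only [bfun_inr_succ] at hu
    exact congrArg Fin.val ((oB T hT).injective (Subtype.ext hu))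
  simp [hππ, hρρ]

lemma G_surj : Function.Surjective (G (a := a) (b := b)) := by
  rintro ⟨f, hf⟩
  classical
  set T : Finset (Fin (a+1+(b+1))) :=
    insert (f (inl 0)) (Finset.image (fun u : Fin (b+1) => f (inr u)) univ) with hTdef
  have hnotmem : f (inl 0) ∉ Finset.image (fun u : Fin (b+1) => f (inr u)) univ := by
    rw [Finset.mem_image]
    rintro ⟨u, -, heq⟩
    exact absurd (f.injective heq) (by simp)
  have hrmem : ∀ u : Fin (b+1), f (inr u) ∈ T := by
    intro u
    exact Finset.mem_insert_of_mem (Finset.mem_image.mpr ⟨u, Finset.mem_univ _, rfl⟩)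
  have hT : T.card = b + 2 := by
    have hinj2 : Function.Injective (fun u : Fin (b+1) => f (inr u)) :=
      fun u u' h => Sum.inr_injective (f.injective h)
    rw [hTdef, Finset.card_insert_of_notMem hnotmem, Finset.card_image_of_injective _ hinj2]
    simp
  have hle : ∀ y ∈ T, f (inl 0) ≤ y := by
    intro y hy
    rcases Finset.mem_insert.mp hy with rfl | hy
    · exact le_refl _
    · rw [Finset.mem_image] at hy
      obtain ⟨u, -, rfl⟩ := hy
      rcases eq_or_ne u 0 with rfl | hu
      · exact hf.1.le
      · exact (hf.1.trans (hf.2 u hu)).le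
  have h1 : em1 T hT = f (inl 0) :=
    le_antisymm (Finset.min'_le _ _ (Finset.mem_insert_self _ _))
      (Finset.le_min' _ _ _ hle)
  have hT1 : T1 T hT = Finset.image (fun u : Fin (b+1) => f (inr u)) univ := by
    rw [T1, h1, hTdef, Finset.erase_insert hnotmem]
  have h2 : em2 T hT = f (inr 0) := by
    refine le_antisymm (Finset.min'_le _ _ ?_) (Finset.le_min' _ _ _ ?_)
    · rw [hT1, Finset.mem_image]
      exact ⟨0, Finset.mem_univ _, rfl⟩
    · intro y hy
      rw [hT1, Finset.mem_image] at hy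
      obtain ⟨u, -, rfl⟩ := hy
      rcases eq_or_ne u 0 with rfl | hu
      · exact le_refl _
      · exact (hf.2 u hu).le
  have hAmem : ∀ x : Fin a, f (inl x.succ) ∈ Tᶜ := by
    intro x
    rw [Finset.mem_compl, hTdef]
    intro hmem
    rcases Finset.mem_insert.mp hmem with heq | hmem
    · exact absurd (f.injective heq) (by simp [Fin.succ_ne_zero])
    · rw [Finset.mem_image] at hmem
      obtain ⟨u, -, heq⟩ := hmem
      simpa using f.injective heq.symm
  have hBmem : ∀ u : Fin b, f (inr u.succ) ∈ T2 T hT := by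
    intro u
    rw [T2, Finset.mem_erase, h2, hT1]
    constructor
    · intro heq
      have := f.injective heq
      simpa [Fin.succ_ne_zero] using this
    · exact Finset.mem_image.mpr ⟨u.succ, Finset.mem_univ _, rfl⟩
  let pf : Fin a → Fin a := fun x => (oA T hT).symm ⟨f (inl x.succ), hAmem x⟩
  have hpinj : Function.Injective pf := by
    intro x y h
    have h2 := congrArg (fun z => ((oA T hT) z : Fin (a+1+(b+1)))) h
    simp only [pf, OrderIso.apply_symm_apply] at h2
    exact Fin.succ_injective _ (Sum.inl_injective (f.injective h2))
  let rf : Fin b → Fin b := fun u => (oB T hT).symm ⟨f (inr u.succ), hBmem u⟩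
  have hrinj : Function.Injective rf := by
    intro x y h
    have h2 := congrArg (fun z => ((oB T hT) z : Fin (a+1+(b+1)))) h
    simp only [rf, OrderIso.apply_symm_apply] at h2
    exact Fin.succ_injective _ (Sum.inr_injective (f.injective h2))
  refine ⟨⟨⟨T, hT⟩, Equiv.ofBijective pf (Finite.injective_iff_bijective.mp hpinj),
    Equiv.ofBijective rf (Finite.injective_iff_bijective.mp hrinj)⟩, ?_⟩
  apply Subtype.ext
  apply Equiv.coe_fn_injective
  funext w
  show bfun T hT _ _ w = f w
  rcases w with x | u
  · induction x using Fin.cases with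
    | zero => simpa using h1
    | succ x =>
      simp only [bfun_inl_succ, Equiv.ofBijective_apply, pf, OrderIso.apply_symm_apply]
  · induction u using Fin.cases with
    | zero => simpa using h2
    | succ u =>
      simp only [bfun_inr_succ, Equiv.ofBijective_apply, rf, OrderIso.apply_symm_apply]

lemma card_condA (a b : ℕ) :
    Nat.card {f : (Fin (a+1) ⊕ Fin (b+1)) ≃ Fin (a+1+(b+1)) // CondA f} =
      a.factorial * b.factorial * (a+1+(b+1)).choose (b+2) := by
  rw [← Nat.card_eq_of_bijective G ⟨G_inj, G_surj⟩]
  rw [Nat.card_prod, Nat.card_prod, Nat.card_eq_fintype_card, Nat.card_eq_fintype_card,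
    Nat.card_eq_fintype_card, Fintype.card_finset_len, Fintype.card_perm, Fintype.card_perm,
    Fintype.card_fin, Fintype.card_fin, Fintype.card_fin]
  ring

abbrev BG (a b : ℕ) : SimpleGraph (Fin (a+1) ⊕ Fin (b+1)) :=
  bridgeJoin (⊤ : SimpleGraph (Fin (a+1))) (⊤ : SimpleGraph (Fin (b+1))) 0 0

lemma adj_inl_inl {u v : Fin (a+1)} : (BG a b).Adj (inl u) (inl v) ↔ u ≠ v := by
  simp [bridgeJoin, SimpleGraph.fromRel_adj]
  tauto

lemma adj_inr_inr {u v : Fin (b+1)} : (BG a b).Adj (inr u) (inr v) ↔ u ≠ v := by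
  simp [bridgeJoin, SimpleGraph.fromRel_adj]
  tauto

lemma adj_inl_inr {u : Fin (a+1)} {v : Fin (b+1)} :
    (BG a b).Adj (inl u) (inr v) ↔ u = 0 ∧ v = 0 := by
  simp [bridgeJoin, SimpleGraph.fromRel_adj]

lemma adj_inr_inl {u : Fin (b+1)} {v : Fin (a+1)} :
    (BG a b).Adj (inr u) (inl v) ↔ v = 0 ∧ u = 0 := by
  simp [bridgeJoin, SimpleGraph.fromRel_adj]

def CondB {a b N : ℕ} (f : (Fin (a+1) ⊕ Fin (b+1)) ≃ Fin N) : Prop :=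
  f (inr 0) < f (inl 0) ∧ ∀ x : Fin (a+1), x ≠ 0 → f (inl 0) < f (inl x)

lemma prefix_iff (f : (Fin (a+1) ⊕ Fin (b+1)) ≃ Fin (a+1+(b+1))) :
    IsRWLPrefix (BG a b) ⇑f.symm ↔ CondA f ∨ CondB f := by
  haveI : NeZero (a+1+(b+1)) := ⟨by omega⟩
  constructor
  · rintro ⟨hinj, hstep⟩
    rcases he0 : f.symm 0 with w | w
    · left
      have claim : ∀ k : ℕ, ∀ i : Fin (a+1+(b+1)), i.val ≤ k → ∀ u, f.symm i = inr u →
          f (inr 0) ≤ i := by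
        intro k
        induction k with
        | zero =>
          intro i hi u hu
          exfalso
          have hieq : i = 0 := Fin.ext (by simpa using hi)
          rw [hieq, he0] at hu
          simp at hu
        | succ k IH =>
          intro i hi u hu
          rcases eq_or_ne u 0 with rfl | hune
          · exact le_of_eq (by rw [← hu, Equiv.apply_symm_apply])
          · have hi0 : i.val ≠ 0 := by
              intro h0
              have hieq : i = 0 := Fin.ext (by simpa using h0)
              rw [hieq, he0] at hu
              simp at hu
            obtain ⟨j, hj, hadj⟩ := hstep i hi0
            rcases hw : f.symm j with x | x
            · rw [hu, hw, adj_inl_inr] at hadj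
              exact absurd hadj.2 hune
            · have hjk : j.val ≤ k := by
                have hlt : j.val < i.val := hj
                omega
              exact le_trans (IH j hjk x hw) (le_of_lt hj)
      have hR : ∀ u : Fin (b+1), f (inr 0) ≤ f (inr u) := fun u =>
        claim (f (inr u)).val (f (inr u)) le_rfl u (by simp)
      have hlt : f (inl 0) < f (inr 0) := by
        have hR0 : (f (inr 0)).val ≠ 0 := by
          intro h0
          have h00 : f (inr 0) = 0 := Fin.ext (by simpa using h0)
          have : f.symm 0 = inr 0 := by rw [← h00, Equiv.symm_apply_apply]
          rw [he0] at this
          simp at this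
        obtain ⟨j, hj, hadj⟩ := hstep (f (inr 0)) hR0
        rw [Equiv.symm_apply_apply] at hadj
        rcases hw : f.symm j with x | x
        · rw [hw, adj_inl_inr] at hadj
          have hjeq : j = f (inl 0) := by
            have := congrArg f hw
            rw [Equiv.apply_symm_apply, hadj.1] at this
            exact this
          exact hjeq ▸ hj
        · rw [hw, adj_inr_inr] at hadj
          exact absurd hj (not_lt.mpr (claim j.val j le_rfl x hw))
      exact ⟨hlt, fun u hu =>
        lt_of_le_of_ne (hR u) fun heq => hu (inr_injective (f.injective heq)).symm⟩
    · right
      have claim : ∀ k : ℕ, ∀ i : Fin (a+1+(b+1)), i.val ≤ k → ∀ u, f.symm i = inl u →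
          f (inl 0) ≤ i := by
        intro k
        induction k with
        | zero =>
          intro i hi u hu
          exfalso
          have hieq : i = 0 := Fin.ext (by simpa using hi)
          rw [hieq, he0] at hu
          simp at hu
        | succ k IH =>
          intro i hi u hu
          rcases eq_or_ne u 0 with rfl | hune
          · exact le_of_eq (by rw [← hu, Equiv.apply_symm_apply])
          · have hi0 : i.val ≠ 0 := by
              intro h0
              have hieq : i = 0 := Fin.ext (by simpa using h0)
              rw [hieq, he0] at hu
              simp at hu
            obtain ⟨j, hj, hadj⟩ := hstep i hi0
            rcases hw : f.symm j with x | x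
            · have hjk : j.val ≤ k := by
                have hlt : j.val < i.val := hj
                omega
              exact le_trans (IH j hjk x hw) (le_of_lt hj)
            · rw [hu, hw, adj_inr_inl] at hadj
              exact absurd hadj.1 hune
      have hR : ∀ u : Fin (a+1), f (inl 0) ≤ f (inl u) := fun u =>
        claim (f (inl u)).val (f (inl u)) le_rfl u (by simp)
      have hlt : f (inr 0) < f (inl 0) := by
        have hR0 : (f (inl 0)).val ≠ 0 := by
          intro h0
          have h00 : f (inl 0) = 0 := Fin.ext (by simpa using h0)
          have : f.symm 0 = inl 0 := by rw [← h00, Equiv.symm_apply_apply]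
          rw [he0] at this
          simp at this
        obtain ⟨j, hj, hadj⟩ := hstep (f (inl 0)) hR0
        rw [Equiv.symm_apply_apply] at hadj
        rcases hw : f.symm j with x | x
        · rw [hw, adj_inl_inl] at hadj
          exact absurd hj (not_lt.mpr (claim j.val j le_rfl x hw))
        · rw [hw, adj_inr_inl] at hadj
          have hjeq : j = f (inr 0) := by
            have := congrArg f hw
            rw [Equiv.apply_symm_apply, hadj.2] at this
            exact this
          exact hjeq ▸ hj
      exact ⟨hlt, fun u hu =>
        lt_of_le_of_ne (hR u) fun heq => hu (inl_injective (f.injective heq)).symm⟩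
  · rintro (⟨h1, h2⟩ | ⟨h1, h2⟩)
    · refine ⟨f.symm.injective, ?_⟩
      intro i hi
      have he0 : ∃ w, f.symm 0 = inl w := by
        rcases hw : f.symm 0 with w | w
        · exact ⟨w, rfl⟩
        · exfalso
          have h00 : f (inr w) = 0 := by rw [← hw, Equiv.apply_symm_apply]
          rcases eq_or_ne w 0 with rfl | hwne
          · rw [h00] at h1
            rw [Fin.lt_def, Fin.val_zero] at h1
            omega
          · have hh := h2 w hwne
            rw [h00, Fin.lt_def, Fin.val_zero] at hh
            omega
      obtain ⟨w0, hw0⟩ := he0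
      rcases hv : f.symm i with x | u
      · refine ⟨0, by rw [Fin.lt_def, Fin.val_zero]; omega, ?_⟩
        rw [hw0, adj_inl_inl]
        intro heq
        apply hi
        have h0i : (0 : Fin (a+1+(b+1))) = i := f.symm.injective (by rw [hw0, hv, heq])
        rw [← h0i]
        simp
      · rcases eq_or_ne u 0 with rfl | hu
        · have hieq : i = f (inr 0) := by rw [← hv, Equiv.apply_symm_apply]
          refine ⟨f (inl 0), by rw [hieq]; exact h1, ?_⟩
          rw [Equiv.symm_apply_apply, adj_inl_inr]
          exact ⟨rfl, rfl⟩
        · have hieq : i = f (inr u) := by rw [← hv, Equiv.apply_symm_apply]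
          refine ⟨f (inr 0), by rw [hieq]; exact h2 u hu, ?_⟩
          rw [Equiv.symm_apply_apply, adj_inr_inr]
          exact fun h => hu h.symm
    · refine ⟨f.symm.injective, ?_⟩
      intro i hi
      have he0 : ∃ w, f.symm 0 = inr w := by
        rcases hw : f.symm 0 with w | w
        · exfalso
          have h00 : f (inl w) = 0 := by rw [← hw, Equiv.apply_symm_apply]
          rcases eq_or_ne w 0 with rfl | hwne
          · rw [h00] at h1
            rw [Fin.lt_def, Fin.val_zero] at h1
            omega
          · have hh := h2 w hwne
            rw [h00, Fin.lt_def, Fin.val_zero] at hh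
            omega
        · exact ⟨w, rfl⟩
      obtain ⟨w0, hw0⟩ := he0
      rcases hv : f.symm i with x | u
      · rcases eq_or_ne x 0 with rfl | hx
        · have hieq : i = f (inl 0) := by rw [← hv, Equiv.apply_symm_apply]
          refine ⟨f (inr 0), by rw [hieq]; exact h1, ?_⟩
          rw [Equiv.symm_apply_apply, adj_inr_inl]
          exact ⟨rfl, rfl⟩
        · have hieq : i = f (inl x) := by rw [← hv, Equiv.apply_symm_apply]
          refine ⟨f (inl 0), by rw [hieq]; exact h2 x hx, ?_⟩
          rw [Equiv.symm_apply_apply, adj_inl_inl]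
          exact fun h => hx h.symm
      · refine ⟨0, by rw [Fin.lt_def, Fin.val_zero]; omega, ?_⟩
        rw [hw0, adj_inr_inr]
        intro heq
        apply hi
        have h0i : (0 : Fin (a+1+(b+1))) = i := f.symm.injective (by rw [hw0, hv, heq])
        rw [← h0i]
        simp

noncomputable def E0 :
    {v : Fin (a+1+(b+1)) → (Fin (a+1) ⊕ Fin (b+1)) // IsRWLPrefix (BG a b) v} ≃
      {f : (Fin (a+1) ⊕ Fin (b+1)) ≃ Fin (a+1+(b+1)) // IsRWLPrefix (BG a b) ⇑f.symm} where
  toFun := fun p => ⟨(Equiv.ofBijective p.1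
      ((Fintype.bijective_iff_injective_and_card p.1).mpr ⟨p.2.1, by simp⟩)).symm, by
    simpa using p.2⟩
  invFun := fun q => ⟨⇑q.1.symm, q.2⟩
  left_inv := fun p => Subtype.ext rfl
  right_inv := fun q => Subtype.ext (by
    refine Equiv.symm_bijective.injective ?_
    rw [Equiv.symm_symm]
    exact Equiv.coe_fn_injective rfl)

def swapEquiv (a b : ℕ) : ((Fin (b+1) ⊕ Fin (a+1)) ≃ Fin (b+1+(a+1))) ≃
    ((Fin (a+1) ⊕ Fin (b+1)) ≃ Fin (a+1+(b+1))) :=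
  Equiv.equivCongr (Equiv.sumComm (Fin (b+1)) (Fin (a+1)))
    (finCongr (by omega : b+1+(a+1) = a+1+(b+1)))

lemma card_condB (a b : ℕ) :
    Nat.card {f : (Fin (a+1) ⊕ Fin (b+1)) ≃ Fin (a+1+(b+1)) // CondB f} =
      b.factorial * a.factorial * (b+1+(a+1)).choose (a+2) := by
  have hswap : ∀ g : (Fin (b+1) ⊕ Fin (a+1)) ≃ Fin (b+1+(a+1)),
      CondA g ↔ CondB (swapEquiv a b g) := by
    intro g
    simp only [CondA, CondB, swapEquiv, Equiv.equivCongr_apply_apply, Equiv.sumComm_symm,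
      Equiv.sumComm_apply, Sum.swap_inl, Sum.swap_inr, Fin.lt_def, finCongr_apply,
      Fin.coe_cast]
  rw [← Nat.card_congr (Equiv.subtypeEquiv (swapEquiv a b) hswap), card_condA b a]

lemma main_core (a b : ℕ) :
    Nat.card {v : Fin (a+1+(b+1)) → (Fin (a+1) ⊕ Fin (b+1)) // IsRWLPrefix (BG a b) v} =
      a.factorial * b.factorial *
        ((a+1+(b+1)).choose (b+2) + (a+1+(b+1)).choose (a+2)) := by
  classical
  have hdisj : Disjoint (CondA (a := a) (b := b) (N := a+1+(b+1))) CondB :=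
    Pi.disjoint_iff.mpr fun f => Prop.disjoint_iff.mpr fun ⟨hA, hB⟩ => lt_asymm hA.1 hB.1
  have e2 : {f : (Fin (a+1) ⊕ Fin (b+1)) ≃ Fin (a+1+(b+1)) // IsRWLPrefix (BG a b) ⇑f.symm} ≃
      {f : (Fin (a+1) ⊕ Fin (b+1)) ≃ Fin (a+1+(b+1)) // CondA f} ⊕
      {f : (Fin (a+1) ⊕ Fin (b+1)) ≃ Fin (a+1+(b+1)) // CondB f} :=
    (Equiv.subtypeEquivRight prefix_iff).trans (_root_.subtypeOrEquiv _ _ hdisj)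
  rw [Nat.card_congr (E0.trans e2), Nat.card_sum, card_condA, card_condB]
  have harg : b+1+(a+1) = a+1+(b+1) := by omega
  rw [harg]
  ring

end RWLBarbell

theorem rwlCount_barbell (m n : ℕ) (hm : 1 ≤ m) (hn : 1 ≤ n) :
    rwlCount (bridgeJoin (⊤ : SimpleGraph (Fin m)) (⊤ : SimpleGraph (Fin n))
        ⟨0, hm⟩ ⟨0, hn⟩) =
      (m - 1).factorial * (n - 1).factorial *
        (Nat.choose (m + n) (n + 1) + Nat.choose (m + n) (m + 1)) := by
  obtain ⟨a, rfl⟩ : ∃ a, m = a + 1 := ⟨m - 1, by omega⟩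
  obtain ⟨b, rfl⟩ : ∃ b, n = b + 1 := ⟨n - 1, by omega⟩
  have h0l : (⟨0, hm⟩ : Fin (a+1)) = 0 := rfl
  have h0r : (⟨0, hn⟩ : Fin (b+1)) = 0 := rfl
  rw [h0l, h0r]
  show rwlCount (RWLBarbell.BG a b) = _
  rw [rwlCount]
  have hc : Fintype.card (Fin (a+1) ⊕ Fin (b+1)) = a+1+(b+1) := by simp
  rw [hc, rwlPrefixCount, RWLBarbell.main_core]
  norm_num
end

section
/- For all nonnegative integers m and n, \sum_{k=0}^{n} 2^{\,n-k}\binom{k+m}{k} = \sum_{k=0}^{n}\binom{m+1+n}{m+1+k} (equivalently, 2^{n}\sum_{k=0}^{n}\binom{k+m}{k}2^{-k} = \sum_{k=0}^{n}\binom{m+1+n}{m+1+k}). -/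
open Finset

lemma key (m n : ℕ) :
    ∑ k ∈ Finset.range (n + 2), Nat.choose (m + n + 2) (m + 1 + k) =
      2 * ∑ k ∈ Finset.range (n + 1), Nat.choose (m + n + 1) (m + 1 + k)
        + Nat.choose (m + n + 1) m := by
  have h1 : ∀ k ∈ Finset.range (n + 2),
      Nat.choose (m + n + 2) (m + 1 + k)
        = Nat.choose (m + n + 1) (m + k) + Nat.choose (m + n + 1) (m + 1 + k) := by
    intro k _
    have e1 : m + n + 2 = (m + n + 1) + 1 := by omega
    have e2 : m + 1 + k = (m + k) + 1 := by omega
    rw [e1, e2, Nat.choose_succ_succ]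
  rw [Finset.sum_congr rfl h1, Finset.sum_add_distrib]
  have h2 : ∑ k ∈ Finset.range (n + 2), Nat.choose (m + n + 1) (m + k)
      = Nat.choose (m + n + 1) m
        + ∑ k ∈ Finset.range (n + 1), Nat.choose (m + n + 1) (m + 1 + k) := by
    rw [Finset.sum_range_succ']
    have h : ∀ k ∈ Finset.range (n + 1), Nat.choose (m + n + 1) (m + (k + 1))
        = Nat.choose (m + n + 1) (m + 1 + k) := by
      intro k _; congr 1; omega
    rw [Finset.sum_congr rfl h]
    simp [Nat.add_comm]
  have h3 : ∑ k ∈ Finset.range (n + 2), Nat.choose (m + n + 1) (m + 1 + k)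
      = ∑ k ∈ Finset.range (n + 1), Nat.choose (m + n + 1) (m + 1 + k) := by
    rw [Finset.sum_range_succ]
    have : Nat.choose (m + n + 1) (m + 1 + (n + 1)) = 0 := by
      apply Nat.choose_eq_zero_of_lt; omega
    simp [this]
  rw [h2, h3]
  ring

theorem sum_two_pow_choose (m n : ℕ) :
    ∑ k ∈ Finset.range (n + 1), 2 ^ (n - k) * Nat.choose (k + m) k =
      ∑ k ∈ Finset.range (n + 1), Nat.choose (m + 1 + n) (m + 1 + k) := by
  induction n with
  | zero => simp
  | succ n ih =>
    rw [Finset.sum_range_succ]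
    have hL : ∑ k ∈ Finset.range (n + 1), 2 ^ (n + 1 - k) * Nat.choose (k + m) k
        = 2 * ∑ k ∈ Finset.range (n + 1), 2 ^ (n - k) * Nat.choose (k + m) k := by
      rw [Finset.mul_sum]
      apply Finset.sum_congr rfl
      intro k hk
      have hk' : k ≤ n := by simpa using Nat.lt_succ_iff.mp (Finset.mem_range.mp hk)
      have : n + 1 - k = (n - k) + 1 := by omega
      rw [this, pow_succ]
      ring
    rw [hL, ih]
    simp only [Nat.sub_self, pow_zero, one_mul]
    rw [show m + 1 + (n + 1) = m + n + 2 from by omega,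
        show m + 1 + n = m + n + 1 from by omega]
    rw [key m n]
    have hchoose : Nat.choose (n + 1 + m) (n + 1) = Nat.choose (m + n + 1) m := by
      have h := Nat.choose_symm (n := m + n + 1) (k := n + 1) (by omega)
      rw [show m + n + 1 - (n + 1) = m from by omega] at h
      rw [show n + 1 + m = m + n + 1 from by omega]
      exact h.symm
    rw [hchoose]
end
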